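/- arXiv:1905.13188 — 7 statements merged into one kernel-verified Lean document; each statement's English description precedes it below -/
import Mathlib

section
/- Step lemma: Let M be a countable metric space, α > 0, K ≥ 1, and let {φ_n} be a commuting system of retractions as in the retractional-basis setup (φ_n(M) = {μ_0,...,μ_n}, φ_m φ_n = φ_n φ_m = φ_n for n ≤ m). Suppose (μ_{i_1}, ..., μ_{i_j}) with j > 1 is a chain (i.e. i_1 < ... < i_j and φ_{i_m − 1}(μ_{i_m}) = μ_{i_{m−1}} for each m ≥ 2), and suppose there exist distinct points x_1, ..., x_k ∈ M with d(x_l, x_{l+1}) ≤ α for all l, x_1 = μ_{i_j}, x_k = μ_{i_1}, and sup_{i_1 ≤ n ≤ i_j} Lip(φ_n) ≤ K. Then d(μ_{i_{m−1}}, μ_{i_m}) ≤ 2Kα for all m ∈ {2, ..., j}. -/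
/-!
Fix `m` and put `n = ii m`. Collapsing the chain gives `φ n (μ (ii (j-1))) = μ n`, whereas
`φ n (μ (ii 0)) = μ (ii 0) ≠ μ n`, so along the path `x` there is a step `x t, x (t+1)` where
`φ n (x t) = μ n` but `φ n (x (t+1)) ≠ μ n`. The latter point already lies in the range of
`φ (n-1)`, so `φ (n-1)` and `φ n` agree on `x (t+1)`, and
`d(μ (ii (m-1)), μ n) = d(φ (n-1) (x t), φ n (x t))` is at most
`d(φ (n-1) (x t), φ (n-1) (x (t+1))) + d(φ n (x (t+1)), φ n (x t)) ≤ 2 K α`.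
-/

open scoped NNReal

theorem exists_lt_and_not_succ_of_zero_of_not {P : ℕ → Prop} :
    ∀ {n : ℕ}, P 0 → ¬ P n → ∃ t < n, P t ∧ ¬ P (t + 1)
  | 0, h0, hn => absurd h0 hn
  | n + 1, h0, hn => by
    by_cases h : P n
    · exact ⟨n, n.lt_succ_self, h, hn⟩
    · obtain ⟨t, ht, hPt, hPt'⟩ := exists_lt_and_not_succ_of_zero_of_not h0 h
      exact ⟨t, ht.trans n.lt_succ_self, hPt, hPt'⟩

section Retractions

variable {M : Type*} {μ : ℕ → M} {φ : ℕ → M → M}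

theorem apply_chain_eq (hcomm : ∀ n m, n ≤ m → ∀ y : M, φ n (φ m y) = φ n y)
    (hretr : ∀ n k, k ≤ n → φ n (μ k) = μ k) {j : ℕ} {ii : ℕ → ℕ}
    (hmono : StrictMonoOn ii (Set.Iio j))
    (hchain : ∀ m, 0 < m → m < j → φ (ii m - 1) (μ (ii m)) = μ (ii (m - 1)))
    {q r : ℕ} (hqr : q ≤ r) (hr : r < j) : φ (ii q) (μ (ii r)) = μ (ii q) := by
  induction r, hqr using Nat.le_induction with
  | base => exact hretr _ _ le_rfl
  | succ r hqr ih =>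
    have hlt : ii q < ii (r + 1) := hmono (by simp; omega) (by simpa using hr) (by omega)
    rw [← hcomm _ _ (Nat.le_sub_one_of_lt hlt), hchain (r + 1) r.succ_pos hr]
    exact ih (by omega)

theorem apply_pred_eq_of_ne (hrange : ∀ n, Set.range (φ n) ⊆ μ '' Set.Iic n)
    (hretr : ∀ n k, k ≤ n → φ n (μ k) = μ k)
    (hcomm : ∀ n m, n ≤ m → ∀ y : M, φ n (φ m y) = φ n y) {n : ℕ} {y : M}
    (hy : φ n y ≠ μ n) : φ (n - 1) y = φ n y := by
  obtain ⟨s, hs, hsy⟩ : φ n y ∈ μ '' Set.Iic n := hrange n (Set.mem_range_self y)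
  have hsn : s ≤ n - 1 := by
    have : s ≠ n := by rintro rfl; exact hy hsy.symm
    have : s ≤ n := hs
    omega
  rw [← hcomm _ _ (n.sub_le 1), ← hsy, hretr _ _ hsn]

variable [PseudoMetricSpace M]

theorem dist_apply_pred_le_of_step (hrange : ∀ n, Set.range (φ n) ⊆ μ '' Set.Iic n)
    (hretr : ∀ n k, k ≤ n → φ n (μ k) = μ k)
    (hcomm : ∀ n m, n ≤ m → ∀ y : M, φ n (φ m y) = φ n y) {n : ℕ} {K : ℝ≥0}
    {α : ℝ} (hlip : LipschitzWith K (φ n)) (hlip_pred : LipschitzWith K (φ (n - 1)))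
    {y y' : M} (hy : φ n y = μ n) (hy' : φ n y' ≠ μ n) (hyy' : dist y y' ≤ α) :
    dist (φ (n - 1) (μ n)) (μ n) ≤ 2 * K * α := by
  have hKα : (K : ℝ) * dist y y' ≤ K * α := mul_le_mul_of_nonneg_left hyy' K.coe_nonneg
  calc dist (φ (n - 1) (μ n)) (μ n) = dist (φ (n - 1) y) (φ n y) := by
        rw [← hy, hcomm _ _ (n.sub_le 1)]
    _ ≤ dist (φ (n - 1) y) (φ (n - 1) y') + dist (φ n y') (φ n y) := by
        rw [← apply_pred_eq_of_ne hrange hretr hcomm hy']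
        exact dist_triangle _ _ _
    _ ≤ K * dist y y' + K * dist y' y :=
        add_le_add (hlip_pred.dist_le_mul _ _) (hlip.dist_le_mul _ _)
    _ ≤ 2 * K * α := by rw [dist_comm y']; linarith

end Retractions

theorem step_lemma_general {M : Type*} [MetricSpace M]
    (α : ℝ) (K : ℝ≥0)
    (μ : ℕ → M) (φ : ℕ → M → M)
    (hμinj : Function.Injective μ)
    (hrange : ∀ n, Set.range (φ n) = μ '' Set.Iic n)
    (hretr : ∀ n k, k ≤ n → φ n (μ k) = μ k)
    (hcomm : ∀ n m, n ≤ m → ∀ y : M, φ m (φ n y) = φ n y ∧ φ n (φ m y) = φ n y)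
    -- the chain (μ (ii 0), ..., μ (ii (j-1)))
    (j : ℕ) (ii : ℕ → ℕ) (hmono : StrictMonoOn ii (Set.Iio j))
    (hchain : ∀ m, 0 < m → m < j → φ (ii m - 1) (μ (ii m)) = μ (ii (m - 1)))
    -- the connecting points x 1, ..., x k (here indexed 0, ..., k-1)
    (k : ℕ) (x : ℕ → M)
    (hstep : ∀ l, l + 1 < k → dist (x l) (x (l + 1)) ≤ α)
    (hx0 : x 0 = μ (ii (j - 1))) (hxlast : x (k - 1) = μ (ii 0))
    (hlip : ∀ n, ii 0 ≤ n → n ≤ ii (j - 1) → LipschitzWith K (φ n)) :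
    ∀ m, 0 < m → m < j → dist (μ (ii (m - 1))) (μ (ii m)) ≤ 2 * (K : ℝ) * α := by
  intro m hm hmj
  have hcomm' : ∀ n m, n ≤ m → ∀ y : M, φ n (φ m y) = φ n y :=
    fun n m h y => (hcomm n m h y).2
  have hmem : ∀ a, a < j → a ∈ Set.Iio j := fun _ => id
  have h0m : ii 0 < ii m := hmono (hmem 0 (by omega)) (hmem m hmj) hm
  have hmlast : ii m ≤ ii (j - 1) := hmono.monotoneOn (hmem m hmj) (hmem _ (by omega)) (by omega)
  have hstart : φ (ii m) (x 0) = μ (ii m) := by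
    rw [hx0, apply_chain_eq hcomm' hretr hmono hchain (by omega) (by omega)]
  have hend : φ (ii m) (x (k - 1)) ≠ μ (ii m) := by
    rw [hxlast, hretr _ _ h0m.le]
    exact hμinj.ne h0m.ne
  obtain ⟨t, htk, ht, ht'⟩ := exists_lt_and_not_succ_of_zero_of_not
    (P := fun l => φ (ii m) (x l) = μ (ii m)) hstart hend
  rw [← hchain m hm hmj]
  exact dist_apply_pred_le_of_step (fun n => (hrange n).subset) hretr hcomm' (hlip _ h0m.le hmlast)
    (hlip _ (by omega) (by omega)) ht ht' (hstep t (by omega))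

/-- Step lemma: in a countable metric space with a commuting system of
retractions `φ n` onto `{μ 0, ..., μ n}`, if `(μ (ii 0), ..., μ (ii (j-1)))` is a chain,
and there are distinct points `x 0, ..., x (k-1)` with consecutive distances `≤ α`
joining `μ (ii (j-1))` to `μ (ii 0)`, and all `φ n` with `ii 0 ≤ n ≤ ii (j-1)` are
`K`-Lipschitz (`K ≥ 1`), then consecutive chain points are at distance `≤ 2 K α`. -/
theorem step_lemma {M : Type*} [MetricSpace M] [Countable M] (z : M)
    (α : ℝ) (K : ℝ≥0) (hα : 0 < α) (hK : (1 : ℝ≥0) ≤ K)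
    (μ : ℕ → M) (φ : ℕ → M → M)
    (hμ0 : μ 0 = z) (hμinj : Function.Injective μ)
    (hrange : ∀ n, Set.range (φ n) = μ '' Set.Iic n)
    (hretr : ∀ n k, k ≤ n → φ n (μ k) = μ k)
    (hcomm : ∀ n m, n ≤ m → ∀ y : M, φ m (φ n y) = φ n y ∧ φ n (φ m y) = φ n y)
    -- the chain (μ (ii 0), ..., μ (ii (j-1)))
    (j : ℕ) (hj : 1 < j) (ii : ℕ → ℕ) (hmono : StrictMonoOn ii (Set.Iio j))
    (hchain : ∀ m, 0 < m → m < j → φ (ii m - 1) (μ (ii m)) = μ (ii (m - 1)))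
    -- the connecting points x 1, ..., x k (here indexed 0, ..., k-1)
    (k : ℕ) (hk : 0 < k) (x : ℕ → M) (hxinj : Set.InjOn x (Set.Iio k))
    (hstep : ∀ l, l + 1 < k → dist (x l) (x (l + 1)) ≤ α)
    (hx0 : x 0 = μ (ii (j - 1))) (hxlast : x (k - 1) = μ (ii 0))
    (hlip : ∀ n, ii 0 ≤ n → n ≤ ii (j - 1) → LipschitzWith K (φ n)) :
    ∀ m, 0 < m → m < j → dist (μ (ii (m - 1))) (μ (ii m)) ≤ 2 * (K : ℝ) * α :=
  step_lemma_general α K μ φ hμinj hrange hretr hcomm j ii hmono hchain k x hstep hx0 hxlast hlip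
end

section
/- Let n ≥ 10 and let {φ_i}_{i=0}^n be a system of retractions on the graph circle C_n^0 with centre 0 = x_0 satisfying: φ_i(C_n^0) = {μ_0, ..., μ_i} for an enumeration μ_0 = 0, μ_1, ..., μ_n of C_n^0, each φ_i is the identity on its image, and φ_j φ_i = φ_i φ_j = φ_i for i ≤ j. Then there exists s ∈ {1,...,n} such that the Lipschitz constant of φ_s is at least (√(8n+1) − 1)/8. -/
/-!
Suppose every `φ s` with `s ≥ 1` is strictly `L`-Lipschitz on the circle, where
`L = (√(8n+1) - 1)/8`, i.e. `n = 8L² + 2L`. A gap at stage `s` is an arc between two consecutive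
points of `{μ 1, …, μ s}`. Stage `1` has a gap of length `n ≥ L`; adding `μ (s+1)` splits one
gap in two, so at the last stage `t` with a gap of length `g ≥ L` either every vertex is occupied
(`g = 1`) or `g < 2L`.

Walk through the vertices of that gap and apply `φ t`. Consecutive images are less than `L` apart,
so none of them is the centre (which is at distance `n` from the circle); hence they are occupied
vertices, which lie on the complementary arc of length `n - g`. As `L ≤ g`, consecutive images are
also less than `L` apart along that arc, and the walk runs from one end of it to the other since
`φ t` fixes the ends of the gap. Thus `n - g ≤ gL`, which contradicts `n = 8L² + 2L` both when
`g = 1` and when `g < 2L`.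
-/

open Set

theorem eq_of_natCast_dvd_sub {n : ℕ} {a b : ℤ} (h : (n : ℤ) ∣ a - b) (hab : a < b + n)
    (hba : b < a + n) : a = b :=
  sub_eq_zero.mp (Int.eq_zero_of_abs_lt_dvd h (abs_lt.mpr ⟨by omega, by omega⟩))

def IsGap {M : Type*} (c : ℤ → M) (A : Set M) (p : ℤ) (g : ℕ) : Prop :=
  0 < g ∧ c p ∈ A ∧ c (p + g) ∈ A ∧ ∀ d : ℕ, 0 < d → d < g → c (p + d) ∉ A

section Gaps

variable {M : Type*} {c : ℤ → M} {n : ℕ} {A B : Set M} {p : ℤ} {g : ℕ}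

theorem isGap_period (hc : ∀ a b, c a = c b ↔ (n : ℤ) ∣ a - b) (hn : 0 < n) (hp : c p ∈ A)
    (hA : ∀ q, c q ∈ A → c q = c p) : IsGap c A p n := by
  refine ⟨hn, hp, ?_, fun d hd hdn hdA => ?_⟩
  · rwa [(hc _ _).2 ⟨1, by ring⟩]
  · have := eq_of_natCast_dvd_sub ((hc _ _).1 (hA _ hdA)) (by omega) (by omega)
    omega

namespace IsGap

theorem le_period (hc : ∀ a b, c a = c b ↔ (n : ℤ) ∣ a - b) (hn : 0 < n)
    (h : IsGap c A p g) : g ≤ n := by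
  by_contra! hgn
  refine h.2.2.2 n hn hgn ?_
  rw [(hc _ _).2 ⟨1, by ring⟩]
  exact h.2.1

theorem eq_one_of_range_subset (h : IsGap c A p g) (hA : range c ⊆ A) : g = 1 := by
  by_contra hg
  exact h.2.2.2 1 one_pos (by have := h.1; omega) (hA (mem_range_self _))

theorem exists_mem_Icc (hc : ∀ a b, c a = c b ↔ (n : ℤ) ∣ a - b) (hn : 0 < n)
    (h : IsGap c A p g) {q : ℤ} (hq : c q ∈ A) : ∃ r ∈ Icc (p + g) (p + n), c r = c q := by
  set r := p + 1 + (q - p - 1) % n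
  have h0 : 0 ≤ (q - p - 1) % n := Int.emod_nonneg _ (by omega)
  have h1 : (q - p - 1) % n < n := Int.emod_lt_of_pos _ (by omega)
  have hrq : c r = c q := by
    rw [hc, show r - q = (q - p - 1) % n - (q - p - 1) by ring]
    exact Int.dvd_emod_sub_self
  refine ⟨r, ⟨?_, by omega⟩, hrq⟩
  by_contra! hr
  refine h.2.2.2 (r - p).toNat (by omega) (by omega) ?_
  rwa [show p + ((r - p).toNat : ℤ) = r by omega, hrq]

theorem exists_le_two_mul (hc : ∀ a b, c a = c b ↔ (n : ℤ) ∣ a - b) (hn : 0 < n)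
    (h : IsGap c A p g) {y : M} (hAB : A ⊆ B) (hBA : B ⊆ insert y A) :
    ∃ p' g', IsGap c B p' g' ∧ g ≤ 2 * g' := by
  have hgn := h.le_period hc hn
  obtain ⟨hg, hp, hpg, hfree⟩ := h
  by_cases hnew : ∃ d : ℕ, 0 < d ∧ d < g ∧ c (p + d) ∈ B
  swap
  · push Not at hnew
    exact ⟨p, g, ⟨hg, hAB hp, hAB hpg, hnew⟩, by omega⟩
  obtain ⟨d₀, hd₀, hd₀g, hd₀B⟩ := hnew
  have hy : ∀ d : ℕ, 0 < d → d < g → c (p + d) ∈ B → c (p + d) = y := fun d h1 h2 hB =>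
    (hBA hB).resolve_right (hfree d h1 h2)
  -- `y` occurs only once among the vertices of the gap, because `g ≤ n`.
  have huniq : ∀ d : ℕ, 0 < d → d < g → c (p + d) ∈ B → d = d₀ := by
    intro d h1 h2 hB
    have := (hc _ _).1 ((hy d h1 h2 hB).trans (hy d₀ hd₀ hd₀g hd₀B).symm)
    have := eq_of_natCast_dvd_sub this (by omega) (by omega)
    omega
  have hleft : IsGap c B p d₀ := ⟨hd₀, hAB hp, hd₀B, fun d h1 h2 hB => by
    have := huniq d h1 (by omega) hB
    omega⟩
  have hright : IsGap c B (p + d₀) (g - d₀) := by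
    refine ⟨by omega, hd₀B, ?_, fun d h1 h2 hB => ?_⟩
    · rw [show p + d₀ + ((g - d₀ : ℕ) : ℤ) = p + g by omega]
      exact hAB hpg
    · have := huniq (d₀ + d) (by omega) (by omega) (by rwa [Nat.cast_add, ← add_assoc])
      omega
  rcases le_total (g - d₀) d₀ with h' | h'
  · exact ⟨p, d₀, hleft, by omega⟩
  · exact ⟨_, _, hright, by omega⟩

end IsGap

theorem exists_long_gap_eq_one_or_lt_two_mul (hc : ∀ a b, c a = c b ↔ (n : ℤ) ∣ a - b)
    (hn : 0 < n) {A : ℕ → Set M} (hmono : Monotone A)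
    (hsucc : ∀ s, ∃ y, A (s + 1) ⊆ insert y (A s)) {N s₀ : ℕ} (hAN : range c ⊆ A N)
    {p₀ : ℤ} {g₀ : ℕ} {L : ℝ} (hs₀ : s₀ ≤ N) (h₀ : IsGap c (A s₀) p₀ g₀)
    (hL₀ : L ≤ g₀) :
    ∃ t, s₀ ≤ t ∧ t ≤ N ∧
      ∃ p g, IsGap c (A t) p g ∧ L ≤ g ∧ (g = 1 ∨ (g : ℝ) < 2 * L) := by
  classical
  let Q t := ∃ p g, IsGap c (A t) p g ∧ L ≤ (g : ℝ)
  have hQ₀ : Q s₀ := ⟨p₀, g₀, h₀, hL₀⟩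
  obtain ⟨p, g, hgap, hLg⟩ := Nat.findGreatest_spec hs₀ hQ₀
  refine ⟨_, Nat.le_findGreatest hs₀ hQ₀, Nat.findGreatest_le N, p, g, hgap, hLg, ?_⟩
  rcases (Nat.findGreatest_le (P := Q) N).lt_or_eq with ht | ht
  · obtain ⟨y, hy⟩ := hsucc (Nat.findGreatest Q N)
    obtain ⟨p', g', hgap', hgg'⟩ := hgap.exists_le_two_mul hc hn (hmono (Nat.le_succ _)) hy
    have hg' : (g' : ℝ) < L := by
      by_contra! hLg'
      exact Nat.findGreatest_is_greatest (Nat.lt_succ_self _) ht ⟨p', g', hgap', hLg'⟩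
    have : (g : ℝ) ≤ 2 * g' := by exact_mod_cast hgg'
    exact .inr (by linarith)
  · exact .inl (hgap.eq_one_of_range_subset (by rwa [ht]))

end Gaps

def circleDist (n : ℕ) (k : ℤ) : ℤ := min (k % n) (n - k % n)

section CircleDist

variable {n : ℕ} {k : ℤ}

theorem circleDist_nonneg (hn : 0 < n) : 0 ≤ circleDist n k :=
  le_min (Int.emod_nonneg _ (by omega)) (by linarith [Int.emod_lt_of_pos k (b := n) (by omega)])

theorem circleDist_eq_zero_iff (hn : 0 < n) : circleDist n k = 0 ↔ (n : ℤ) ∣ k := by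
  have h0 := Int.emod_nonneg k (b := n) (by omega)
  have h1 := Int.emod_lt_of_pos k (b := n) (by omega)
  rw [Int.dvd_iff_emod_eq_zero, circleDist]
  omega

theorem circleDist_eq_min_abs (hk : |k| < n) : circleDist n k = min |k| (n - |k|) := by
  obtain ⟨hk₁, hk₂⟩ := abs_lt.mp hk
  rcases le_or_gt 0 k with h | h
  · rw [circleDist, abs_of_nonneg h, Int.emod_eq_of_lt h hk₂]
  · have hmod : k % n = k + n := by
      rw [← Int.add_emod_right, Int.emod_eq_of_lt (by omega) (by omega)]
    rw [circleDist, abs_of_neg h, hmod, min_comm]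
    congr 1 <;> ring

theorem abs_lt_of_circleDist_lt (hn : 0 < n) {L : ℝ} (hk : ((|k| : ℤ) : ℝ) + L ≤ n)
    (h : (circleDist n k : ℝ) < L) : ((|k| : ℤ) : ℝ) < L := by
  have h0 : (0 : ℝ) ≤ circleDist n k := by exact_mod_cast circleDist_nonneg hn
  have hkn : |k| < n := by exact_mod_cast (show ((|k| : ℤ) : ℝ) < n by linarith)
  rw [circleDist_eq_min_abs hkn] at h
  push_cast at h hk ⊢
  rcases min_lt_iff.mp h with h | h
  · exact h
  · linarith

end CircleDist

section Walk

variable {M : Type*} {c : ℤ → M} {n : ℕ}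

theorem forall_mem_range_of_dist_succ_lt [PseudoMetricSpace M] {f : M → M} {o : M} {L : ℝ}
    {p : ℤ} (hfo : ∀ q, f (c q) ∈ insert o (range c)) (ho : ∀ q, L ≤ dist (c q) o)
    (hstep : ∀ a, dist (f (c a)) (f (c (a + 1))) < L) (hp : f (c p) ∈ range c) :
    ∀ e : ℕ, f (c (p + e)) ∈ range c
  | 0 => by simpa using hp
  | e + 1 => by
    obtain ⟨r, hr⟩ := forall_mem_range_of_dist_succ_lt hfo ho hstep hp e
    rw [Nat.cast_succ, ← add_assoc]
    refine (hfo _).resolve_left fun hfo' => ?_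
    have := hstep (p + e)
    rw [← hr, hfo'] at this
    exact (ho r).not_gt this

variable [MetricSpace M]

theorem eq_iff_dvd_of_dist_eq (hn : 0 < n)
    (hc : ∀ a b, dist (c a) (c b) = circleDist n (a - b)) (a b : ℤ) :
    c a = c b ↔ (n : ℤ) ∣ a - b := by
  rw [← dist_eq_zero, hc, Int.cast_eq_zero, circleDist_eq_zero_iff hn]

theorem dist_succ_eq_one (hn : 2 ≤ n) (hc : ∀ a b, dist (c a) (c b) = circleDist n (a - b))
    (a : ℤ) : dist (c a) (c (a + 1)) = 1 := by
  rw [hc, show a - (a + 1) = -1 by ring, circleDist_eq_min_abs (by simp; omega)]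
  simp only [abs_neg, abs_one]
  rw [min_eq_left (by omega), Int.cast_one]

theorem IsGap.sub_le_mul (hn : 0 < n) (hc : ∀ a b, dist (c a) (c b) = circleDist n (a - b))
    {A : Set M} {p : ℤ} {g : ℕ} (h : IsGap c A p g) {f : M → M} {L : ℝ} (hLg : L ≤ g)
    (hwalk : ∀ e : ℕ, f (c (p + e)) ∈ A ∩ range c) (hp : f (c p) = c p)
    (hpg : f (c (p + g)) = c (p + g)) (hstep : ∀ a, dist (f (c a)) (f (c (a + 1))) < L) :
    (n : ℝ) - g ≤ g * L := by
  have hc' := eq_iff_dvd_of_dist_eq hn hc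
  have hg := h.le_period hc' hn
  have hg0 := h.1
  -- Unwrap the walk into the arc `[p + g, p + n]` complementary to the gap; as `L ≤ g`, a
  -- circle distance `< L` between two points of that arc is their distance in `ℤ`.
  have : ∀ e : ℕ, ∃ r ∈ Icc (p + g) (p + n), c r = f (c (p + e)) := fun e => by
    obtain ⟨hA, q, hq⟩ := hwalk e
    rw [← hq] at hA ⊢
    exact h.exists_mem_Icc hc' hn hA
  choose r hrI hr using this
  have hr0 : r 0 = p + n := by
    have hdvd := (hc' _ _).1 ((hr 0).trans (by simpa using hp))
    obtain ⟨h₁, h₂⟩ := hrI 0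
    refine eq_of_natCast_dvd_sub (n := n) ?_ (by omega) (by omega)
    rw [← sub_sub]
    exact dvd_sub hdvd dvd_rfl
  have hrg : r g = p + g := by
    have hdvd := (hc' _ _).1 ((hr g).trans hpg)
    obtain ⟨h₁, h₂⟩ := hrI g
    exact eq_of_natCast_dvd_sub hdvd (by omega) (by omega)
  have hshort : ∀ e, dist (r e : ℝ) (r (e + 1)) ≤ L := fun e => by
    have hrstep := hstep (p + e)
    rw [← hr e, show p + e + 1 = p + (e + 1 : ℕ) by push_cast; ring, ← hr (e + 1), hc]
      at hrstep
    have hle : |r e - r (e + 1)| ≤ n - g := by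
      obtain ⟨h₁, h₂⟩ := hrI e
      obtain ⟨h₃, h₄⟩ := hrI (e + 1)
      exact abs_le.mpr ⟨by omega, by omega⟩
    rw [Real.dist_eq, ← Int.cast_sub, ← Int.cast_abs]
    refine (abs_lt_of_circleDist_lt hn ?_ hrstep).le
    have : ((|r e - r (e + 1)| : ℤ) : ℝ) ≤ n - g := by exact_mod_cast hle
    linarith
  calc (n : ℝ) - g = r 0 - r g := by rw [hr0, hrg]; push_cast; ring
    _ ≤ dist (r 0 : ℝ) (r g) := (le_abs_self _).trans_eq (Real.dist_eq _ _).symm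
    _ ≤ ∑ e ∈ Finset.range g, dist (r e : ℝ) (r (e + 1)) :=
      dist_le_range_sum_dist (fun e => (r e : ℝ)) g
    _ ≤ g * L := by
      simpa using Finset.sum_le_card_nsmul (Finset.range g) _ L fun e _ => hshort e

theorem IsGap.sub_le_mul_of_retraction (hn : 2 ≤ n)
    (hc : ∀ a b, dist (c a) (c b) = circleDist n (a - b)) {o : M}
    (ho : ∀ q, dist (c q) o = n) {A : Set M} {p : ℤ} {g : ℕ} (h : IsGap c A p g)
    {f : M → M} {L : ℝ} (hLg : L ≤ g) (hA : A ⊆ insert o (range c))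
    (hfA : ∀ q, f (c q) ∈ A) (hfix : ∀ y ∈ A, f y = y)
    (hlip : ∀ a b, c a ≠ c b → dist (f (c a)) (f (c b)) < L * dist (c a) (c b)) :
    (n : ℝ) - g ≤ g * L := by
  have hn₀ : 0 < n := by omega
  have hstep : ∀ a, dist (f (c a)) (f (c (a + 1))) < L := fun a => by
    have hone := dist_succ_eq_one hn hc a
    simpa [hone] using hlip a (a + 1) (dist_pos.mp (by rw [hone]; exact one_pos))
  have hLn : L ≤ n :=
    hLg.trans (by exact_mod_cast h.le_period (eq_iff_dvd_of_dist_eq hn₀ hc) hn₀)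
  have hrange := forall_mem_range_of_dist_succ_lt (fun q => hA (hfA q))
    (fun q => (ho q).symm ▸ hLn) hstep (by rw [hfix _ h.2.1]; exact mem_range_self p)
  exact h.sub_le_mul hn₀ hc hLg (fun e => ⟨hfA _, hrange e⟩) (hfix _ h.2.1) (hfix _ h.2.2.1)
    hstep

end Walk

section Enumeration

variable {M : Type*} {N : ℕ} (μ : Fin (N + 1) → M)

theorem monotone_image_val_le :
    Monotone fun s : ℕ => μ '' {j | (j : ℕ) ≤ s} :=
  fun _ _ hss' => image_mono fun _ hj => le_trans hj hss'

theorem exists_image_val_le_succ_subset_insert (s : ℕ) :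
    ∃ y, μ '' {j | (j : ℕ) ≤ s + 1} ⊆ insert y (μ '' {j | (j : ℕ) ≤ s}) := by
  refine ⟨μ (Fin.ofNat (N + 1) (s + 1)), ?_⟩
  rintro _ ⟨j, hj, rfl⟩
  rcases (show (j : ℕ) ≤ s + 1 from hj).lt_or_eq with hjs | hjs
  · exact mem_insert_of_mem _ (mem_image_of_mem μ (Nat.lt_succ_iff.mp hjs))
  · left
    congr 1
    ext
    rw [Fin.val_ofNat, ← hjs, Nat.mod_eq_of_lt j.isLt]

theorem image_val_le_self : μ '' {j | (j : ℕ) ≤ N} = range μ := by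
  simp [Fin.is_le]

end Enumeration

theorem exists_isGap_image_val_le_one {M : Type*} {c : ℤ → M} {n : ℕ}
    (hc : ∀ a b, c a = c b ↔ (n : ℤ) ∣ a - b) (hn : 0 < n) {o : M} (ho : o ∉ range c)
    {μ : Fin (n + 1) → M} (hμ₀ : μ 0 = o) (hμ : Function.Injective μ)
    (hμc : range μ ⊆ insert o (range c)) :
    ∃ p, IsGap c (μ '' {j | (j : ℕ) ≤ 1}) p n := by
  obtain ⟨p, hp⟩ : μ ⟨1, by omega⟩ ∈ range c :=
    (hμc (mem_range_self _)).resolve_left fun h => by simpa using hμ (h.trans hμ₀.symm)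
  refine ⟨p, isGap_period hc hn ⟨_, show (1 : ℕ) ≤ 1 from le_rfl, hp.symm⟩ ?_⟩
  rintro q ⟨j, hj, hjq⟩
  rcases Nat.le_one_iff_eq_zero_or_eq_one.mp hj with hj₀ | hj₁
  · rw [show j = 0 from Fin.ext hj₀, hμ₀] at hjq
    exact absurd ⟨q, hjq.symm⟩ ho
  · rw [← hjq, hp]
    exact congrArg μ (Fin.ext hj₁)

section GraphCircle

variable {M : Type*} {n : ℕ} {x : Fin (n + 1) → M}

/-- `ℤ` parametrises the vertices `x 1, …, x n` of the circle `n`-periodically; `x 0` is its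
centre. -/
def circleIndex (n : ℕ) (q : ℤ) : Fin (n + 1) := Fin.ofNat (n + 1) ((q % n).toNat + 1)

theorem circleIndex_val (hn : 0 < n) (q : ℤ) : ((circleIndex n q : ℕ) : ℤ) = q % n + 1 := by
  have h₀ := Int.emod_nonneg q (b := n) (by omega)
  have h₁ := Int.emod_lt_of_pos q (b := n) (by omega)
  rw [circleIndex, Fin.val_ofNat, Nat.mod_eq_of_lt (by omega)]
  omega

theorem circleIndex_ne_zero (hn : 0 < n) (q : ℤ) : circleIndex n q ≠ 0 := fun h => by
  have h₀ := Int.emod_nonneg q (b := n) (by omega)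
  have := circleIndex_val hn q
  rw [h, Fin.val_zero] at this
  omega

theorem range_eq_insert_range_circleIndex (hn : 0 < n) :
    range x = insert (x 0) (range fun q => x (circleIndex n q)) := by
  refine Subset.antisymm ?_ (insert_subset (mem_range_self 0) (range_subset_iff.mpr
    fun q => mem_range_self _))
  rintro _ ⟨k, rfl⟩
  rcases eq_or_ne k 0 with rfl | hk
  · exact mem_insert _ _
  · refine mem_insert_of_mem _ ⟨(k : ℤ) - 1, congrArg x (Fin.ext ?_)⟩
    have hk₀ : (k : ℕ) ≠ 0 := Fin.val_ne_of_ne hk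
    have := circleIndex_val hn ((k : ℤ) - 1)
    rw [Int.emod_eq_of_lt (by omega) (by omega)] at this
    omega

variable [MetricSpace M]

theorem dist_circleIndex (hn : 0 < n)
    (hd : ∀ k l : Fin (n + 1), k ≠ 0 → l ≠ 0 →
      dist (x k) (x l) = min ((((k : ℕ) : ℤ) - ((l : ℕ) : ℤ)).natAbs : ℝ)
        ((n : ℝ) - ((((k : ℕ) : ℤ) - ((l : ℕ) : ℤ)).natAbs : ℝ)))
    (a b : ℤ) :
    dist (x (circleIndex n a)) (x (circleIndex n b)) = circleDist n (a - b) := by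
  have ha₀ := Int.emod_nonneg a (b := n) (by omega)
  have ha₁ := Int.emod_lt_of_pos a (b := n) (by omega)
  have hb₀ := Int.emod_nonneg b (b := n) (by omega)
  have hb₁ := Int.emod_lt_of_pos b (b := n) (by omega)
  have hk : |a % n - b % n| < n := abs_lt.mpr ⟨by omega, by omega⟩
  have hmod : circleDist n (a - b) = circleDist n (a % n - b % n) := by
    simp only [circleDist, Int.sub_emod a b]
  rw [hd _ _ (circleIndex_ne_zero hn a) (circleIndex_ne_zero hn b), circleIndex_val hn,
    circleIndex_val hn, hmod, circleDist_eq_min_abs hk, add_sub_add_right_eq_sub]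
  push_cast [Nat.cast_natAbs]
  rfl

theorem centre_notMem_range_circleIndex (hn : 0 < n)
    (hd0 : ∀ k : Fin (n + 1), k ≠ 0 → dist (x k) (x 0) = (n : ℝ)) :
    x 0 ∉ range fun q => x (circleIndex n q) :=
  fun ⟨q, (hq : x (circleIndex n q) = x 0)⟩ => by
  have := hd0 _ (circleIndex_ne_zero hn q)
  rw [hq, dist_self] at this
  exact hn.ne (by exact_mod_cast this)

end GraphCircle

theorem eight_mul_sq_add_two_mul_of_sqrt {y : ℝ} (hy : 0 ≤ y) :
    8 * ((√(8 * y + 1) - 1) / 8) ^ 2 + 2 * ((√(8 * y + 1) - 1) / 8) = y := by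
  nlinarith [Real.sq_sqrt (show (0 : ℝ) ≤ 8 * y + 1 by positivity)]

theorem lt_eight_mul_sq_add_two_mul {L : ℝ} {n g : ℕ} (hn : 2 ≤ n) (hL : 0 ≤ L)
    (hg : (n : ℝ) - g ≤ g * L) (hg' : g = 1 ∨ (g : ℝ) < 2 * L) :
    (n : ℝ) < 8 * L ^ 2 + 2 * L := by
  have hn' : (2 : ℝ) ≤ n := by exact_mod_cast hn
  rcases hg' with rfl | hg'
  · rw [Nat.cast_one] at hg
    nlinarith
  · nlinarith

theorem circle_retraction_lower_bound_general {M : Type*} [MetricSpace M]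
    (n : ℕ) (hn : 10 ≤ n) (x : Fin (n + 1) → M)
    (hd0 : ∀ k : Fin (n + 1), k ≠ 0 → dist (x k) (x 0) = (n : ℝ))
    (hd : ∀ k l : Fin (n + 1), k ≠ 0 → l ≠ 0 →
      dist (x k) (x l) = min ((((k : ℕ) : ℤ) - ((l : ℕ) : ℤ)).natAbs : ℝ)
        ((n : ℝ) - ((((k : ℕ) : ℤ) - ((l : ℕ) : ℤ)).natAbs : ℝ)))
    (μ : Fin (n + 1) → M) (hμ0 : μ 0 = x 0) (hμinj : Function.Injective μ)
    (hμrange : Set.range μ = Set.range x)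
    (φ : Fin (n + 1) → M → M)
    (hmaps : ∀ i : Fin (n + 1), ∀ p ∈ Set.range x, ∃ j ≤ i, φ i p = μ j)
    (hretr : ∀ i : Fin (n + 1), ∀ j ≤ i, φ i (μ j) = μ j) :
    ∃ s : Fin (n + 1), s ≠ 0 ∧ ∃ a ∈ Set.range x, ∃ b ∈ Set.range x, a ≠ b ∧
      (Real.sqrt (8 * n + 1) - 1) / 8 * dist a b ≤ dist (φ s a) (φ s b) := by
  set L := (Real.sqrt (8 * n + 1) - 1) / 8
  have hL₀ : 0 ≤ L := div_nonneg (sub_nonneg.mpr (Real.one_le_sqrt.mpr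
    (by linarith [n.cast_nonneg' (α := ℝ)]))) (by norm_num)
  have hnL : 8 * L ^ 2 + 2 * L = n := eight_mul_sq_add_two_mul_of_sqrt n.cast_nonneg'
  by_contra! hlip
  have hn₀ : 0 < n := by omega
  set c : ℤ → M := fun q => x (circleIndex n q)
  have hc := dist_circleIndex hn₀ hd
  have hc' := eq_iff_dvd_of_dist_eq hn₀ hc
  have hrange : range x = insert (x 0) (range c) := range_eq_insert_range_circleIndex hn₀
  obtain ⟨p₁, hgap₁⟩ := exists_isGap_image_val_le_one hc' hn₀
    (centre_notMem_range_circleIndex hn₀ hd0) hμ0 hμinj (hrange ▸ hμrange.le)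
  have hLn : L ≤ n := by nlinarith
  obtain ⟨t, ht₁, htn, p, g, hgap, hLg, hg⟩ := exists_long_gap_eq_one_or_lt_two_mul hc' hn₀
    (monotone_image_val_le μ) (exists_image_val_le_succ_subset_insert μ)
    (by rw [image_val_le_self, hμrange, hrange]; exact subset_insert _ _) (by omega) hgap₁ hLn
  set τ : Fin (n + 1) := ⟨t, by omega⟩
  have hkey : (n : ℝ) - g ≤ g * L := hgap.sub_le_mul_of_retraction (by omega) hc
    (fun q => hd0 _ (circleIndex_ne_zero hn₀ q)) hLg
    (hrange ▸ hμrange ▸ image_subset_range _ _)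
    (fun q => by
      obtain ⟨j, hj, hjq⟩ := hmaps τ _ (mem_range_self _)
      exact ⟨j, hj, hjq.symm⟩)
    (by rintro _ ⟨j, hj, rfl⟩; exact hretr τ j hj)
    (fun a b hab => hlip τ (Fin.ne_of_val_ne (by simp [τ]; omega)) _ (mem_range_self _) _
      (mem_range_self _) hab)
  exact (lt_eight_mul_sq_add_two_mul (by omega) hL₀ hkey hg).ne hnL.symm

/-- any commuting system of retractions `φ i` (onto nested sets
`{μ 0, ..., μ i}`, enumerating the circle, with `μ 0` the centre) on the graph circle
`C_n^0` of radius `n ≥ 10` contains a map with Lipschitz constant at least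
`(√(8n+1) - 1)/8`. The circle is realized as points `x 0, ..., x n` of a metric space
with the graph-circle distances. -/
theorem circle_retraction_lower_bound {M : Type*} [MetricSpace M]
    (n : ℕ) (hn : 10 ≤ n) (x : Fin (n + 1) → M) (hxinj : Function.Injective x)
    (hd0 : ∀ k : Fin (n + 1), k ≠ 0 → dist (x k) (x 0) = (n : ℝ))
    (hd : ∀ k l : Fin (n + 1), k ≠ 0 → l ≠ 0 →
      dist (x k) (x l) = min ((((k : ℕ) : ℤ) - ((l : ℕ) : ℤ)).natAbs : ℝ)
        ((n : ℝ) - ((((k : ℕ) : ℤ) - ((l : ℕ) : ℤ)).natAbs : ℝ)))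
    (μ : Fin (n + 1) → M) (hμ0 : μ 0 = x 0) (hμinj : Function.Injective μ)
    (hμrange : Set.range μ = Set.range x)
    (φ : Fin (n + 1) → M → M)
    (hmaps : ∀ i : Fin (n + 1), ∀ p ∈ Set.range x, ∃ j ≤ i, φ i p = μ j)
    (hretr : ∀ i : Fin (n + 1), ∀ j ≤ i, φ i (μ j) = μ j)
    (hcomm : ∀ i j : Fin (n + 1), i ≤ j → ∀ p ∈ Set.range x,
      φ j (φ i p) = φ i p ∧ φ i (φ j p) = φ i p) :
    ∃ s : Fin (n + 1), s ≠ 0 ∧ ∃ a ∈ Set.range x, ∃ b ∈ Set.range x, a ≠ b ∧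
      (Real.sqrt (8 * n + 1) - 1) / 8 * dist a b ≤ dist (φ s a) (φ s b) :=
  circle_retraction_lower_bound_general n hn x hd0 hd μ hμ0 hμinj hμrange φ hmaps hretr
end

section
/- In the setup of a system of retractions on a circle C_n^0 with n ≥ 10: if φ_1(y) = 0 for some y ∈ C_n = C_n^0 \ {x_0}, then there exist points w, z ∈ C_n^0 with d(w, z) = 1 and d(φ_1(w), φ_1(z)) = n; consequently Lip(φ_1) ≥ n. Hence if all φ_i are K-Lipschitz with K < n, then φ_1 maps every point of C_n to μ_1. -/
open scoped NNReal

/-!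
The points `x 1, …, x n` form a path in which consecutive points are at distance `1`, and `φ 1`
takes only the two values `x 0` and `μ 1` on them, which are at distance `n`. If `φ 1` hits both
values on `C_n` (it fixes `μ 1 ∈ C_n`), then it must switch value between two consecutive points,
so it stretches a distance `1` to `n`; this is impossible for a `K`-Lipschitz map with `K < n`.
-/

theorem Fin.eq_zero_or_eq_one_of_le_one {n : ℕ} {j : Fin (n + 1)} (h : j ≤ 1) :
    j = 0 ∨ j = 1 := by
  rcases n with _ | n
  · exact .inl (Subsingleton.elim (α := Fin 1) _ _)
  · simp only [Fin.le_def, Fin.ext_iff, Fin.val_one, Fin.val_zero] at h ⊢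
    omega

theorem SimpleGraph.Reachable.exists_adj_apply_ne {V α : Type*} {G : SimpleGraph V} {u v : V}
    (h : G.Reachable u v) (f : V → α) (hf : f u ≠ f v) : ∃ a b, G.Adj a b ∧ f a ≠ f b := by
  obtain ⟨p⟩ := h
  obtain ⟨d, -, hd, hd'⟩ := p.exists_boundary_dart {w | f w = f u} rfl hf.symm
  exact ⟨d.fst, d.snd, d.adj, fun h => hd' (h.symm.trans hd)⟩

theorem dist_eq_of_mem_pair_of_ne {M : Type*} [MetricSpace M] {a b u v : M}
    (hu : u = a ∨ u = b) (hv : v = a ∨ v = b) (huv : u ≠ v) : dist u v = dist a b := by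
  rcases hu with rfl | rfl <;> rcases hv with rfl | rfl
  all_goals first | exact absurd rfl huv | rfl | exact dist_comm _ _

theorem dist_succ_eq_one_of_pathGraph_adj {M : Type*} [MetricSpace M] {n : ℕ} (hn : 2 ≤ n)
    {x : Fin (n + 1) → M}
    (hd : ∀ k l : Fin (n + 1), k ≠ 0 → l ≠ 0 →
      dist (x k) (x l) = min ((((k : ℕ) : ℤ) - ((l : ℕ) : ℤ)).natAbs : ℝ)
        ((n : ℝ) - ((((k : ℕ) : ℤ) - ((l : ℕ) : ℤ)).natAbs : ℝ)))
    {i j : Fin n} (hij : (SimpleGraph.pathGraph n).Adj i j) :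
    dist (x i.succ) (x j.succ) = 1 := by
  have hstep : ((((i.succ : ℕ) : ℤ) - ((j.succ : ℕ) : ℤ)).natAbs) = 1 := by
    rw [SimpleGraph.pathGraph_adj] at hij
    simp only [Fin.val_succ]
    omega
  have hn' : (2 : ℝ) ≤ n := by exact_mod_cast hn
  rw [hd _ _ (Fin.succ_ne_zero i) (Fin.succ_ne_zero j), hstep, Nat.cast_one,
    min_eq_left (by linarith)]

theorem exists_dist_eq_one_apply_ne {M α : Type*} [MetricSpace M] {n : ℕ} (hn : 2 ≤ n)
    {x : Fin (n + 1) → M}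
    (hd : ∀ k l : Fin (n + 1), k ≠ 0 → l ≠ 0 →
      dist (x k) (x l) = min ((((k : ℕ) : ℤ) - ((l : ℕ) : ℤ)).natAbs : ℝ)
        ((n : ℝ) - ((((k : ℕ) : ℤ) - ((l : ℕ) : ℤ)).natAbs : ℝ)))
    {f : M → α} {k m : Fin (n + 1)} (hk : k ≠ 0) (hm : m ≠ 0) (hf : f (x k) ≠ f (x m)) :
    ∃ w ∈ Set.range x, ∃ z ∈ Set.range x, dist w z = 1 ∧ f w ≠ f z := by
  obtain ⟨k, rfl⟩ := Fin.exists_succ_eq.mpr hk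
  obtain ⟨m, rfl⟩ := Fin.exists_succ_eq.mpr hm
  obtain ⟨a, b, hab, hfab⟩ :=
    (SimpleGraph.pathGraph_preconnected n k m).exists_adj_apply_ne (fun i => f (x i.succ)) hf
  exact ⟨_, ⟨a.succ, rfl⟩, _, ⟨b.succ, rfl⟩, dist_succ_eq_one_of_pathGraph_adj hn hd hab, hfab⟩

theorem circle_phi_one_general {M : Type*} [MetricSpace M]
    (n : ℕ) (hn : 10 ≤ n) (x : Fin (n + 1) → M)
    (hd0 : ∀ k : Fin (n + 1), k ≠ 0 → dist (x k) (x 0) = (n : ℝ))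
    (hd : ∀ k l : Fin (n + 1), k ≠ 0 → l ≠ 0 →
      dist (x k) (x l) = min ((((k : ℕ) : ℤ) - ((l : ℕ) : ℤ)).natAbs : ℝ)
        ((n : ℝ) - ((((k : ℕ) : ℤ) - ((l : ℕ) : ℤ)).natAbs : ℝ)))
    (μ : Fin (n + 1) → M) (hμ0 : μ 0 = x 0) (hμinj : Function.Injective μ)
    (hμrange : Set.range μ = Set.range x)
    (φ : Fin (n + 1) → M → M)
    (hmaps : ∀ i : Fin (n + 1), ∀ p ∈ Set.range x, ∃ j ≤ i, φ i p = μ j)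
    (hretr : ∀ i : Fin (n + 1), ∀ j ≤ i, φ i (μ j) = μ j) :
    ((∃ y ∈ Set.range x, y ≠ x 0 ∧ φ 1 y = x 0) →
      ∃ w ∈ Set.range x, ∃ z ∈ Set.range x, dist w z = 1 ∧
        dist (φ 1 w) (φ 1 z) = (n : ℝ) ∧ (n : ℝ) * dist w z ≤ dist (φ 1 w) (φ 1 z)) ∧
    (∀ K : ℝ≥0, (K : ℝ) < n → (∀ i, LipschitzOnWith K (φ i) (Set.range x)) →
      ∀ y ∈ Set.range x, y ≠ x 0 → φ 1 y = μ 1) := by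
  have hdich : ∀ p ∈ Set.range x, φ 1 p = x 0 ∨ φ 1 p = μ 1 := fun p hp => by
    obtain ⟨j, hj, hφp⟩ := hmaps 1 p hp
    rcases Fin.eq_zero_or_eq_one_of_le_one hj with rfl | rfl
    exacts [.inl (hφp.trans hμ0), .inr hφp]
  obtain ⟨m, hm⟩ : μ 1 ∈ Set.range x := hμrange ▸ Set.mem_range_self 1
  have hμ1 : μ 1 ≠ x 0 := hμ0 ▸ hμinj.ne (by rw [Ne, Fin.one_eq_zero_iff]; omega)
  have hm0 : m ≠ 0 := by rintro rfl; exact hμ1 hm.symm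
  have hdist : dist (x 0) (μ 1) = n := by rw [← hm, dist_comm, hd0 m hm0]
  have jump : (∃ y ∈ Set.range x, y ≠ x 0 ∧ φ 1 y = x 0) →
      ∃ w ∈ Set.range x, ∃ z ∈ Set.range x, dist w z = 1 ∧ dist (φ 1 w) (φ 1 z) = n := by
    rintro ⟨_, ⟨k, rfl⟩, hk, hφk⟩
    have hne : φ 1 (x k) ≠ φ 1 (x m) := by
      rw [hφk, hm, hretr 1 1 le_rfl]; exact hμ1.symm
    obtain ⟨w, hw, z, hz, hwz, hφwz⟩ :=
      exists_dist_eq_one_apply_ne (by omega) hd (fun h => hk (congrArg x h)) hm0 hne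
    refine ⟨w, hw, z, hz, hwz, ?_⟩
    rw [dist_eq_of_mem_pair_of_ne (hdich w hw) (hdich z hz) hφwz, hdist]
  refine ⟨fun hy => ?_, fun K hK hLip y hy hy0 => (hdich y hy).resolve_left fun hφy => ?_⟩
  · obtain ⟨w, hw, z, hz, hwz, hφwz⟩ := jump hy
    exact ⟨w, hw, z, hz, hwz, hφwz, by rw [hwz, hφwz, mul_one]⟩
  · obtain ⟨w, hw, z, hz, hwz, hφwz⟩ := jump ⟨y, hy, hy0, hφy⟩
    have := (hLip 1).dist_le_mul w hw z hz
    rw [hwz, hφwz, mul_one] at this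
    linarith

/-- in the circle setup with `n ≥ 10`: if `φ 1` sends some point of
`C_n = C_n^0 \ {x 0}` to the centre, then there are points `w, z` with `d(w,z) = 1` and
`d(φ 1 w, φ 1 z) = n` (so `Lip (φ 1) ≥ n`); hence if all `φ i` are `K`-Lipschitz with
`K < n`, then `φ 1` maps every point of `C_n` to `μ 1`. -/
theorem circle_phi_one {M : Type*} [MetricSpace M]
    (n : ℕ) (hn : 10 ≤ n) (x : Fin (n + 1) → M) (hxinj : Function.Injective x)
    (hd0 : ∀ k : Fin (n + 1), k ≠ 0 → dist (x k) (x 0) = (n : ℝ))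
    (hd : ∀ k l : Fin (n + 1), k ≠ 0 → l ≠ 0 →
      dist (x k) (x l) = min ((((k : ℕ) : ℤ) - ((l : ℕ) : ℤ)).natAbs : ℝ)
        ((n : ℝ) - ((((k : ℕ) : ℤ) - ((l : ℕ) : ℤ)).natAbs : ℝ)))
    (μ : Fin (n + 1) → M) (hμ0 : μ 0 = x 0) (hμinj : Function.Injective μ)
    (hμrange : Set.range μ = Set.range x)
    (φ : Fin (n + 1) → M → M)
    (hmaps : ∀ i : Fin (n + 1), ∀ p ∈ Set.range x, ∃ j ≤ i, φ i p = μ j)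
    (hretr : ∀ i : Fin (n + 1), ∀ j ≤ i, φ i (μ j) = μ j)
    (hcomm : ∀ i j : Fin (n + 1), i ≤ j → ∀ p ∈ Set.range x,
      φ j (φ i p) = φ i p ∧ φ i (φ j p) = φ i p) :
    ((∃ y ∈ Set.range x, y ≠ x 0 ∧ φ 1 y = x 0) →
      ∃ w ∈ Set.range x, ∃ z ∈ Set.range x, dist w z = 1 ∧
        dist (φ 1 w) (φ 1 z) = (n : ℝ) ∧ (n : ℝ) * dist w z ≤ dist (φ 1 w) (φ 1 z)) ∧
    (∀ K : ℝ≥0, (K : ℝ) < n → (∀ i, LipschitzOnWith K (φ i) (Set.range x)) →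
      ∀ y ∈ Set.range x, y ≠ x 0 → φ 1 y = μ 1) :=
  circle_phi_one_general n hn x hd0 hd μ hμ0 hμinj hμrange φ hmaps hretr
end

section
/- Let N = ⋃_{n=1}^∞ C_{4^n}^0 with the metric defined circle-wise (d(x,y) = d_n(x,y) within C_{4^n}^0, and d(x,y) = max{4^i,4^j} across distinct circles C_{4^i}, C_{4^j}). Then for every commuting system of retractions φ_i : N → N (with |φ_i(N)| = i+1, φ_0(N) = {0}, φ_j φ_i = φ_i φ_j = φ_i for i ≤ j, images nested and their union equal to N), sup_i Lip(φ_i) = ∞. In particular, for every k ≥ 4 there is an index n_k with Lip(φ_{n_k}) ≥ k. -/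
/-!
Suppose no `φ n` stretches any distance by a factor `k ≥ 4`, and look at the circle
of radius `L = 4 ^ k ≥ 16 k²`, identified with `ZMod L`. Take the first `n` for which
`{μ 0, …, μ n}` meets this circle in a `2k`-net `T`. A unit step on the circle is mapped by `φ n`
to a step shorter than `k < 4 ^ k`, so `φ n` maps the circle into itself and restricts to a
retraction `f` onto `T`. Through the nearest point of the net, `f` moves every point by at most
`2k² + 2k`, so `f` winds once around the circle: its winding number is `L`. On the other hand,
by minimality of `n` all points of `T` except `μ n` avoid the `2k`-ball around some `x₀`, so the
image of `f` misses the `k`-ball around a point `q` at distance `k` from `x₀`; steps shorter than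
`k` cannot jump over that ball, so the winding number is `0`.
-/

/-- The union `N = ⋃_{n ≥ 1} C_{4^n}^0` of concentric graph circles, encoded as a subset
of `ℕ × ℕ`: the centre is `(0,0)` and the point `x_i` of the circle of radius `4^n`
(for `1 ≤ i ≤ 4^n`, `n ≥ 1`) is `(n, i)`. -/
def ucSet : Set (ℕ × ℕ) :=
  {p | p = (0, 0) ∨ (1 ≤ p.1 ∧ 1 ≤ p.2 ∧ p.2 ≤ 4 ^ p.1)}

/-- The metric on `N`: graph-circle distance within a circle of radius `4^n`,
distance to the centre equal to the radius, and `max {4^i, 4^j}` across circles. -/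
noncomputable def ucDist (p q : ℕ × ℕ) : ℝ :=
  if p = q then 0
  else if p = (0, 0) ∨ q = (0, 0) then (4 : ℝ) ^ max p.1 q.1
  else if p.1 = q.1 then
    min ((((p.2 : ℤ) - (q.2 : ℤ)).natAbs : ℝ))
      ((4 : ℝ) ^ p.1 - (((p.2 : ℤ) - (q.2 : ℤ)).natAbs : ℝ))
  else max ((4 : ℝ) ^ p.1) ((4 : ℝ) ^ q.1)

section ZModFacts

variable {L : ℕ}

lemma Int.eq_of_intCast_zmod_eq {u v : ℤ} (h : (u : ZMod L) = v) (huv : |u - v| < L) :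
    u = v := by
  rw [ZMod.intCast_eq_intCast_iff_dvd_sub] at h
  have := Int.eq_zero_of_abs_lt_dvd h (by rwa [abs_sub_comm])
  omega

variable [NeZero L]

lemma ZMod.sum_sub_comp_add_one (G : ZMod L → ℤ) : ∑ x, (G (x + 1) - G x) = 0 := by
  rw [Finset.sum_sub_distrib, sub_eq_zero]
  exact Fintype.sum_equiv (Equiv.addRight 1) _ _ fun _ => rfl

lemma ZMod.forall_of_imp_add_one {P : ZMod L → Prop} (a : ZMod L) (ha : P a)
    (h : ∀ x, P x → P (x + 1)) (x : ZMod L) : P x := by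
  have hn : ∀ n : ℕ, P (a + n) := by
    intro n
    induction n with
    | zero => simpa using ha
    | succ n ih => simpa [add_assoc] using h _ ih
  simpa using hn (x - a).val

end ZModFacts

section CycleMetric

variable {L : ℕ}

def cycDist (x y : ZMod L) : ℕ := (x - y).valMinAbs.natAbs

lemma cycDist_self (x : ZMod L) : cycDist x x = 0 := by
  simp [cycDist]

lemma cycDist_comm (x y : ZMod L) : cycDist x y = cycDist y x := by
  rw [cycDist, ← neg_sub, ZMod.natAbs_valMinAbs_neg, cycDist]

lemma cycDist_triangle (x y z : ZMod L) : cycDist x z ≤ cycDist x y + cycDist y z :=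
  calc cycDist x z = ((x - y) + (y - z)).valMinAbs.natAbs := by rw [sub_add_sub_cancel, cycDist]
    _ ≤ ((x - y).valMinAbs + (y - z).valMinAbs).natAbs := ZMod.natAbs_valMinAbs_add_le _ _
    _ ≤ cycDist x y + cycDist y z := Int.natAbs_add_le _ _

lemma cycDist_add_natCast_self (x : ZMod L) {a : ℕ} (ha : a ≤ L / 2) :
    cycDist (x + (a : ZMod L)) x = a := by
  simp [cycDist, ZMod.valMinAbs_natCast_of_le_half ha]

lemma cycDist_add_one_self (hL : 2 ≤ L) (x : ZMod L) : cycDist (x + 1) x = 1 := by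
  simpa using cycDist_add_natCast_self x (a := 1) (by omega)

lemma add_one_ne_self_of_two_le (hL : 2 ≤ L) (x : ZMod L) : x + 1 ≠ x := fun h => by
  simpa [h, cycDist_self] using cycDist_add_one_self hL x

lemma exists_cycDist_eq_and_le_cycDist (x₀ w : ZMod L) {k : ℕ} (hk : 2 * k ≤ L / 2) :
    ∃ q, cycDist x₀ q = k ∧ k ≤ cycDist q w := by
  have hplus : cycDist x₀ (x₀ + (k : ZMod L)) = k := by
    rw [cycDist_comm, cycDist_add_natCast_self x₀ (by omega)]
  have hminus : cycDist x₀ (x₀ - (k : ZMod L)) = k := by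
    simpa using cycDist_add_natCast_self (x₀ - (k : ZMod L)) (a := k) (by omega)
  have hpm : cycDist (x₀ + (k : ZMod L)) (x₀ - k) = 2 * k := by
    have h := cycDist_add_natCast_self (x₀ - (k : ZMod L)) (a := 2 * k) hk
    rwa [Nat.cast_mul, Nat.cast_ofNat, two_mul, sub_add_add_cancel] at h
  have := cycDist_triangle (x₀ + (k : ZMod L)) w (x₀ - k)
  rw [cycDist_comm w] at this
  by_cases hw : k ≤ cycDist (x₀ + (k : ZMod L)) w
  · exact ⟨_, hplus, hw⟩
  · exact ⟨_, hminus, by omega⟩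

def IsCycNet (T : Set (ZMod L)) (r : ℕ) : Prop := ∀ x, ∃ y ∈ T, cycDist x y ≤ r

end CycleMetric

section Winding

variable {L : ℕ} [NeZero L]

def winding (f : ZMod L → ZMod L) : ℤ := ∑ x, (f (x + 1) - f x).valMinAbs

lemma winding_eq_of_lift {f : ZMod L → ZMod L} (G : ZMod L → ℤ) (c : ℤ)
    (hcast : ∀ x, ((G (x + 1) - G x + c : ℤ) : ZMod L) = f (x + 1) - f x)
    (hclose : ∀ x, |(f (x + 1) - f x).valMinAbs - (G (x + 1) - G x + c)| < L) :
    winding f = L * c := by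
  have hstep : ∀ x, (f (x + 1) - f x).valMinAbs = G (x + 1) - G x + c := fun x =>
    Int.eq_of_intCast_zmod_eq (by rw [ZMod.coe_valMinAbs, hcast]) (hclose x)
  simp only [winding, hstep, Finset.sum_add_distrib, ZMod.sum_sub_comp_add_one, Finset.sum_const,
    Finset.card_univ, ZMod.card, nsmul_eq_mul, zero_add]

lemma winding_eq_zero {f : ZMod L → ZMod L} {k : ℕ} (q : ZMod L)
    (hadj : ∀ x, cycDist (f (x + 1)) (f x) < k) (hfar : ∀ x, k ≤ cycDist (f x) q) :
    winding f = 0 := by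
  have hval : ∀ x, k ≤ (f x - q).val ∧ (f x - q).val + k ≤ L := fun x => by
    have hx := hfar x
    rw [cycDist, ZMod.valMinAbs_natAbs_eq_min] at hx
    have := (f x - q).val_lt
    omega
  have := winding_eq_of_lift (f := f) (fun x => ((f x - q).val : ℤ)) 0 (fun x => by
    push_cast [ZMod.natCast_zmod_val]; ring) (fun x => by
    have := hadj x; have := hval x; have := hval (x + 1)
    rw [cycDist] at *
    rw [abs_lt]; omega)
  simpa using this

lemma winding_eq_card {f : ZMod L → ZMod L} {k b : ℕ}
    (hadj : ∀ x, cycDist (f (x + 1)) (f x) < k) (hnear : ∀ x, cycDist (f x) x ≤ b)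
    (hL : k + 2 * b < L) : winding f = L := by
  have := winding_eq_of_lift (f := f) (fun x => (f x - x).valMinAbs) 1 (fun x => by
    push_cast [ZMod.coe_valMinAbs]; ring) (fun x => by
    have := hadj x; have := hnear x; have := hnear (x + 1)
    rw [cycDist] at *
    rw [abs_lt]; omega)
  simpa using this

end Winding

theorem false_of_lipschitz_retraction_cycle {L k : ℕ} (hk : 1 ≤ k) (hL : 16 * k ^ 2 ≤ L)
    {f : ZMod L → ZMod L} {T : Set (ZMod L)} (w x₀ : ZMod L)
    (hlip : ∀ x y, x ≠ y → cycDist (f x) (f y) < k * cycDist x y)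
    (hmaps : ∀ x, f x ∈ T) (hfix : ∀ y ∈ T, f y = y) (hnet : IsCycNet T (2 * k))
    (hgap : ∀ y ∈ T, y ≠ w → 2 * k < cycDist x₀ y) : False := by
  have hkk : k ≤ k ^ 2 := Nat.le_self_pow two_ne_zero k
  have hL2 : 2 ≤ L := by omega
  have : NeZero L := ⟨by omega⟩
  have hadj : ∀ x, cycDist (f (x + 1)) (f x) < k := fun x => by
    simpa [cycDist_add_one_self hL2] using hlip _ _ (add_one_ne_self_of_two_le hL2 x)
  have hnear : ∀ x, cycDist (f x) x ≤ 2 * k ^ 2 + 2 * k := fun x => by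
    obtain ⟨y, hyT, hxy⟩ := hnet x
    rcases eq_or_ne x y with rfl | hne
    · simp [hfix x hyT, cycDist_self]
    have hfxy := hlip x y hne
    have := cycDist_triangle (f x) y x
    rw [hfix y hyT] at hfxy
    rw [cycDist_comm y x] at this
    nlinarith
  obtain ⟨q, hx₀q, hqw⟩ := exists_cycDist_eq_and_le_cycDist x₀ w (k := k) (by omega)
  have hfar : ∀ x, k ≤ cycDist (f x) q := fun x => by
    rcases eq_or_ne (f x) w with hw | hw
    · rw [hw, cycDist_comm]; exact hqw
    have := hgap _ (hmaps x) hw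
    have := cycDist_triangle x₀ q (f x)
    rw [cycDist_comm q] at this
    omega
  have h₀ := winding_eq_zero q hadj hfar
  rw [winding_eq_card hadj hnear (by nlinarith)] at h₀
  exact NeZero.ne L (by exact_mod_cast h₀)

def circlePt (k : ℕ) (x : ZMod (4 ^ k)) : ℕ × ℕ := (k, x.val + 1)

lemma circlePt_injective (k : ℕ) : Function.Injective (circlePt k) := fun x y h => by
  simp only [circlePt, Prod.mk.injEq, add_left_inj] at h
  exact ZMod.val_injective _ h.2

lemma circlePt_mem_ucSet {k : ℕ} (hk : 1 ≤ k) (x : ZMod (4 ^ k)) : circlePt k x ∈ ucSet :=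
  Or.inr ⟨hk, Nat.le_add_left _ _, x.val_lt⟩

lemma exists_eq_circlePt {k : ℕ} (hk : 1 ≤ k) {p : ℕ × ℕ} (hp : p ∈ ucSet)
    (hpk : p.1 = k) : ∃ x, p = circlePt k x := by
  obtain ⟨i, j⟩ := p
  rcases hp with h | ⟨-, hj, hjk⟩
  · simp_all
  dsimp only at hpk hj hjk
  subst hpk
  refine ⟨((j - 1 : ℕ) : ZMod (4 ^ i)), ?_⟩
  simp only [circlePt, ZMod.val_natCast, Nat.mod_eq_of_lt (show j - 1 < 4 ^ i by omega)]
  congr; omega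

lemma ucDist_circlePt {k : ℕ} (x y : ZMod (4 ^ k)) :
    ucDist (circlePt k x) (circlePt k y) = cycDist x y := by
  rcases eq_or_ne x y with rfl | hne
  · simp [ucDist, cycDist_self]
  have hx := x.val_lt
  have hy := y.val_lt
  have hval : min (x - y).val (4 ^ k - (x - y).val) =
      min ((x.val : ℤ) - y.val).natAbs (4 ^ k - ((x.val : ℤ) - y.val).natAbs) := by
    rcases le_total y.val x.val with hxy | hxy
    · rw [ZMod.val_sub hxy]; omega
    · rw [← neg_sub, ZMod.neg_val, if_neg (sub_ne_zero.mpr hne.symm), ZMod.val_sub hxy]; omega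
  rw [ucDist, if_neg ((circlePt_injective k).ne hne), if_neg (by simp [circlePt])]
  simp only [circlePt, ↓reduceIte, Nat.cast_add, Nat.cast_one, add_sub_add_right_eq_sub]
  rw [cycDist, ZMod.valMinAbs_natAbs_eq_min, hval, Nat.cast_min, Nat.cast_sub (by omega)]
  push_cast; rfl

lemma four_pow_le_ucDist_circlePt {k : ℕ} (x : ZMod (4 ^ k)) {p : ℕ × ℕ} (hp : p ∈ ucSet)
    (hpk : p.1 ≠ k) : (4 : ℝ) ^ k ≤ ucDist (circlePt k x) p := by
  have hne : circlePt k x ≠ p := fun h => hpk (h ▸ rfl)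
  rcases hp with rfl | ⟨hp1, hp2, -⟩
  · simp [ucDist, circlePt]
  rw [ucDist, if_neg hne, if_neg (by rintro (h | rfl) <;> simp_all [circlePt]),
    if_neg (show (circlePt k x).1 ≠ p.1 from Ne.symm hpk)]
  exact le_max_left _ _

lemma exists_forall_comp_circlePt_eq {k : ℕ} (hk : 1 ≤ k) {g : ℕ × ℕ → ℕ × ℕ}
    (hg : ∀ p ∈ ucSet, g p ∈ ucSet)
    (hadj : ∀ x, ucDist (g (circlePt k x)) (g (circlePt k (x + 1))) < 4 ^ k)
    (x₀ : ZMod (4 ^ k)) (hx₀ : (g (circlePt k x₀)).1 = k) :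
    ∃ f : ZMod (4 ^ k) → ZMod (4 ^ k), ∀ x, g (circlePt k x) = circlePt k (f x) := by
  have hmem : ∀ x, g (circlePt k x) ∈ ucSet := fun x => hg _ (circlePt_mem_ucSet hk x)
  have hfst : ∀ x, (g (circlePt k x)).1 = k :=
    ZMod.forall_of_imp_add_one x₀ hx₀ fun x hx => by
      by_contra hne
      obtain ⟨z, hz⟩ := exists_eq_circlePt hk (hmem x) hx
      have := four_pow_le_ucDist_circlePt z (hmem (x + 1)) hne
      rw [← hz] at this
      exact (hadj x).not_ge this
  choose f hf using fun x => exists_eq_circlePt hk (hmem x) (hfst x)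
  exact ⟨f, hf⟩

def circlePts (μ : ℕ → ℕ × ℕ) (k n : ℕ) : Set (ZMod (4 ^ k)) :=
  {y | ∃ j < n, μ j = circlePt k y}

lemma not_isCycNet_circlePts_zero (μ : ℕ → ℕ × ℕ) (k r : ℕ) :
    ¬ IsCycNet (circlePts μ k 0) r := fun hnet => by
  obtain ⟨y, ⟨j, hj, -⟩, -⟩ := hnet 0
  exact j.not_lt_zero hj

lemma exists_isCycNet_circlePts {μ : ℕ → ℕ × ℕ} (hμ : ∀ p ∈ ucSet, ∃ i, μ i = p)
    {k : ℕ} (hk : 1 ≤ k) (r : ℕ) : ∃ n, IsCycNet (circlePts μ k n) r := by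
  choose i hi using fun x : ZMod (4 ^ k) => hμ _ (circlePt_mem_ucSet hk x)
  exact ⟨Finset.univ.sup i + 1, fun x =>
    ⟨x, ⟨i x, Nat.lt_succ_of_le (Finset.le_sup (Finset.mem_univ x)), hi x⟩, by
      simp [cycDist_self]⟩⟩

lemma exists_mem_circlePts_of_mem_succ (μ : ℕ → ℕ × ℕ) (k n : ℕ) :
    ∃ w, ∀ y ∈ circlePts μ k (n + 1), y ≠ w → y ∈ circlePts μ k n := by
  by_cases h : ∃ w, μ n = circlePt k w
  · obtain ⟨w, hw⟩ := h
    refine ⟨w, fun y ⟨j, hj, hy⟩ hyw =>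
      ⟨j, lt_of_le_of_ne (Nat.lt_succ_iff.mp hj) ?_, hy⟩⟩
    rintro rfl
    exact hyw (circlePt_injective k (hy.symm.trans hw))
  · refine ⟨0, fun y ⟨j, hj, hy⟩ _ =>
      ⟨j, lt_of_le_of_ne (Nat.lt_succ_iff.mp hj) ?_, hy⟩⟩
    rintro rfl
    exact h ⟨y, hy⟩

lemma sixteen_mul_sq_le_four_pow {k : ℕ} (hk : 4 ≤ k) : 16 * k ^ 2 ≤ 4 ^ k := by
  induction k, hk using Nat.le_induction with
  | base => norm_num
  | succ n hn ih =>
    calc 16 * (n + 1) ^ 2 ≤ 4 * (16 * n ^ 2) := by nlinarith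
      _ ≤ 4 ^ (n + 1) := by rw [pow_succ 4 n]; omega

theorem false_of_lipschitz_retraction_ucSet {μ : ℕ → ℕ × ℕ} (hμ : ∀ i, μ i ∈ ucSet)
    {g : ℕ × ℕ → ℕ × ℕ} {k n : ℕ} (hk : 4 ≤ k)
    (hmaps : ∀ p ∈ ucSet, ∃ j ≤ n, g p = μ j) (hretr : ∀ j ≤ n, g (μ j) = μ j)
    (hlip : ∀ a ∈ ucSet, ∀ b ∈ ucSet, a ≠ b → ucDist (g a) (g b) < k * ucDist a b)
    (hnet : IsCycNet (circlePts μ k (n + 1)) (2 * k))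
    (hgap : ¬ IsCycNet (circlePts μ k n) (2 * k)) : False := by
  have hk1 : 1 ≤ k := by omega
  have hL := sixteen_mul_sq_le_four_pow hk
  have hkL : k < 4 ^ k := Nat.lt_pow_self (by norm_num)
  have hlipCircle : ∀ x y, x ≠ y →
      ucDist (g (circlePt k x)) (g (circlePt k y)) < k * cycDist x y := fun x y hne => by
    simpa [ucDist_circlePt] using hlip _ (circlePt_mem_ucSet hk1 x) _ (circlePt_mem_ucSet hk1 y)
      ((circlePt_injective k).ne hne)
  have hfixT : ∀ y ∈ circlePts μ k (n + 1), g (circlePt k y) = circlePt k y :=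
    fun y ⟨j, hj, hy⟩ => hy ▸ hretr j (Nat.lt_succ_iff.mp hj)
  obtain ⟨f, hf⟩ :
      ∃ f : ZMod (4 ^ k) → ZMod (4 ^ k), ∀ x, g (circlePt k x) = circlePt k (f x) := by
    obtain ⟨y₀, hy₀, -⟩ := hnet 0
    refine exists_forall_comp_circlePt_eq hk1 (fun p hp => ?_) (fun x => ?_) y₀
      (by rw [hfixT y₀ hy₀]; rfl)
    · obtain ⟨j, -, hj⟩ := hmaps p hp
      exact hj ▸ hμ j
    · have h := hlipCircle x (x + 1) (add_one_ne_self_of_two_le (by omega) x).symm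
      rw [cycDist_comm, cycDist_add_one_self (by omega), Nat.cast_one, mul_one] at h
      exact h.trans_le (by exact_mod_cast hkL.le)
  obtain ⟨w, hw⟩ := exists_mem_circlePts_of_mem_succ μ k n
  obtain ⟨x₀, hx₀⟩ : ∃ x₀, ∀ y ∈ circlePts μ k n, 2 * k < cycDist x₀ y := by
    simpa [IsCycNet] using hgap
  refine false_of_lipschitz_retraction_cycle hk1 hL w x₀ (f := f) (fun x y hne => ?_)
    (fun x => ?_) (fun y hy => ?_) hnet (fun y hy hyw => hx₀ y (hw y hy hyw))
  · have := hlipCircle x y hne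
    rw [hf, hf, ucDist_circlePt] at this
    exact_mod_cast this
  · obtain ⟨j, hj, hgj⟩ := hmaps _ (circlePt_mem_ucSet hk1 x)
    exact ⟨j, Nat.lt_succ_of_le hj, by rw [← hgj, hf]⟩
  · exact circlePt_injective k ((hf y).symm.trans (hfixT y hy))

theorem union_circles_no_uniform_retractions_general
    (μ : ℕ → ℕ × ℕ) (hμmem : ∀ i, μ i ∈ ucSet)
    (hμsurj : ∀ p ∈ ucSet, ∃ i, μ i = p)
    (φ : ℕ → ℕ × ℕ → ℕ × ℕ)
    (hmaps : ∀ n, ∀ p ∈ ucSet, ∃ j ≤ n, φ n p = μ j)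
    (hretr : ∀ n j, j ≤ n → φ n (μ j) = μ j) :
    ∀ k : ℕ, 4 ≤ k → ∃ n, ∃ a ∈ ucSet, ∃ b ∈ ucSet, a ≠ b ∧
      (k : ℝ) * ucDist a b ≤ ucDist (φ n a) (φ n b) := by
  intro k hk
  by_contra! hlip
  obtain ⟨n, hgap, hnet⟩ := Nat.exists_not_and_succ_of_not_zero_of_exists
    (not_isCycNet_circlePts_zero μ k (2 * k))
    (exists_isCycNet_circlePts hμsurj (by omega) (2 * k))
  exact false_of_lipschitz_retraction_ucSet hμmem hk (hmaps n) (hretr n) (hlip n) hnet hgap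

/-- every commuting system of retractions on `N = ⋃ C_{4^n}^0`
(with nested images `{μ 0, ..., μ i}` exhausting `N`, `μ 0 = (0,0)`) has unbounded
Lipschitz constants: for every `k ≥ 4` some `φ n` expands a pair of points by a
factor of at least `k`. -/
theorem union_circles_no_uniform_retractions
    (μ : ℕ → ℕ × ℕ) (hμ0 : μ 0 = (0, 0)) (hμmem : ∀ i, μ i ∈ ucSet)
    (hμinj : Function.Injective μ) (hμsurj : ∀ p ∈ ucSet, ∃ i, μ i = p)
    (φ : ℕ → ℕ × ℕ → ℕ × ℕ)
    (hmaps : ∀ n, ∀ p ∈ ucSet, ∃ j ≤ n, φ n p = μ j)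
    (hretr : ∀ n j, j ≤ n → φ n (μ j) = μ j)
    (hcomm : ∀ n m, n ≤ m → ∀ p ∈ ucSet,
      φ m (φ n p) = φ n p ∧ φ n (φ m p) = φ n p) :
    ∀ k : ℕ, 4 ≤ k → ∃ n, ∃ a ∈ ucSet, ∃ b ∈ ucSet, a ≠ b ∧
      (k : ℝ) * ucDist a b ≤ ucDist (φ n a) (φ n b) :=
  union_circles_no_uniform_retractions_general μ hμmem hμsurj φ hmaps hretr
end

section
/- Let M be a metric space, and suppose there are points μ_0 = 0, μ_1, μ_2, ... and commuting retractions φ_n : M → M with φ_n(M) = {μ_0,...,μ_n}, dense union of images, uniform Lipschitz bound K, and φ_m φ_n = φ_n φ_m = φ_n for n ≤ m. Then for every x ∈ {μ_i : i ∈ ℕ} there exists exactly one chain with initial point 0 and final point x; namely, if n is least with φ_i(x) = x for all i ≥ n, the chain is the ordered set T_0^x = ⋃_{i=0}^n {φ_i(x)}. -/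
open scoped NNReal

/-- Two indices `a < b` are consecutive in a chain when `φ (b-1) (μ b) = μ a`. -/
def chainRel {M : Type*} (φ : ℕ → M → M) (μ : ℕ → M) (a b : ℕ) : Prop :=
  a < b ∧ φ (b - 1) (μ b) = μ a

/-- A chain is a finite sequence of indices, consecutive ones related by `chainRel`. -/
def IsChainSeq {M : Type*} (φ : ℕ → M → M) (μ : ℕ → M) (S : List ℕ) : Prop :=
  S.Chain' (chainRel φ μ)

/-!
Since `φ (b - 1) (μ b)` lies in `{μ 0, …, μ (b - 1)}` and `μ` is injective, every `b ≥ 1` has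
exactly one possible predecessor `pred (b - 1) < b` in a chain. Chains starting at `0` are thus
the root paths of the tree on `ℕ` with parent map `c + 1 ↦ pred c`, so there is exactly one
ending at `p`. Along this path, `φ i ∘ φ c = φ i` for `i ≤ c` shows inductively that
`φ b (μ p) = μ b` for each vertex `b`, and that every `φ i (μ p)` is a vertex.
-/

def pathFromZero (pred : ∀ c, Fin (c + 1)) : ℕ → List ℕ
  | 0 => [0]
  | c + 1 => pathFromZero pred (pred c) ++ [c + 1]
decreasing_by exact (pred c).isLt

namespace pathFromZero

variable (pred : ∀ c, Fin (c + 1))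

@[simp]
theorem zero : pathFromZero pred 0 = [0] := by rw [pathFromZero]

theorem succ (c : ℕ) : pathFromZero pred (c + 1) = pathFromZero pred (pred c) ++ [c + 1] := by
  rw [pathFromZero]

theorem ne_nil (b : ℕ) : pathFromZero pred b ≠ [] := by
  cases b <;> simp [succ]

theorem head? (b : ℕ) : (pathFromZero pred b).head? = some 0 := by
  induction b using Nat.strong_induction_on with
  | _ b ih =>
    cases b with
    | zero => simp
    | succ c =>
      rw [succ, List.head?_append_of_ne_nil _ (ne_nil pred _)]
      exact ih _ (pred c).isLt

theorem getLast? (b : ℕ) : (pathFromZero pred b).getLast? = some b := by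
  cases b <;> simp [succ]

theorem le_of_mem {b j : ℕ} (hj : j ∈ pathFromZero pred b) : j ≤ b := by
  induction b using Nat.strong_induction_on generalizing j with
  | _ b ih =>
    cases b with
    | zero => simp_all
    | succ c =>
      rw [succ, List.mem_append, List.mem_singleton] at hj
      rcases hj with hj | rfl
      · exact (ih _ (pred c).isLt hj).trans (pred c).isLt.le
      · rfl

theorem isChain {R : ℕ → ℕ → Prop} (hR : ∀ c, R (pred c) (c + 1)) (b : ℕ) :
    (pathFromZero pred b).IsChain R := by
  induction b using Nat.strong_induction_on with
  | _ b ih =>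
    cases b with
    | zero => simp
    | succ c =>
      rw [succ]
      refine (ih _ (pred c).isLt).append (.singleton _) ?_
      simpa [getLast?] using hR c

theorem eq_of_isChain {R : ℕ → ℕ → Prop} (h0 : ∀ a, ¬R a 0)
    (hR : ∀ a c, R a (c + 1) → a = pred c) {T : List ℕ} {b : ℕ} (hT : T.IsChain R)
    (hhead : T.head? = some 0) (hlast : T.getLast? = some b) : T = pathFromZero pred b := by
  induction T using List.reverseRecOn generalizing b with
  | nil => simp at hlast
  | append_singleton T x ih =>
    obtain rfl : x = b := by simpa using hlast
    rcases T.eq_nil_or_concat' with rfl | ⟨T', a, rfl⟩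
    · obtain rfl : x = 0 := by simpa using hhead
      simp
    · have hax : R a x := by
        simpa using hT.rel_getLast_head_of_append (by simp) (by simp)
      cases x with
      | zero => exact absurd hax (h0 a)
      | succ c =>
        obtain rfl := hR a c hax
        rw [succ, ih (b := pred c) hT.left_of_append (by simpa using hhead) (by simp)]

end pathFromZero

theorem Set.range_eq_image_Iic_of_forall_ge {α : Type*} {f : ℕ → α} {n : ℕ}
    (h : ∀ i, n ≤ i → f i = f n) : Set.range f = f '' Set.Iic n := by
  refine (Set.image_subset_range f _).antisymm' ?_
  rintro _ ⟨i, rfl⟩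
  rcases le_total i n with hi | hi
  · exact ⟨i, hi, rfl⟩
  · exact ⟨n, Set.self_mem_Iic, (h i hi).symm⟩

section Retractions

variable {M : Type*} {μ : ℕ → M} {φ : ℕ → M → M} {pred : ∀ c, Fin (c + 1)}

theorem not_chainRel_zero (a : ℕ) : ¬chainRel φ μ a 0 :=
  fun h => Nat.not_lt_zero a h.1

theorem chainRel_succ_iff (hμ : Function.Injective μ)
    (hpred : ∀ c, μ (pred c) = φ c (μ (c + 1))) {a c : ℕ} :
    chainRel φ μ a (c + 1) ↔ a = pred c := by
  rw [chainRel, Nat.add_sub_cancel, ← hpred, hμ.eq_iff]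
  constructor
  · exact fun h => h.2.symm
  · rintro rfl
    exact ⟨(pred c).isLt, rfl⟩

theorem apply_eq_of_mem_pathFromZero (hretr : ∀ n k, k ≤ n → φ n (μ k) = μ k)
    (hcomm : ∀ n m, n ≤ m → ∀ y, φ n (φ m y) = φ n y)
    (hpred : ∀ c, μ (pred c) = φ c (μ (c + 1))) {p b : ℕ} (hb : b ∈ pathFromZero pred p) :
    φ b (μ p) = μ b := by
  induction p using Nat.strong_induction_on generalizing b with
  | _ p ih =>
    cases p with
    | zero =>
      obtain rfl : b = 0 := by simpa using hb
      exact hretr 0 0 le_rfl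
    | succ c =>
      rw [pathFromZero.succ, List.mem_append, List.mem_singleton] at hb
      rcases hb with hb | rfl
      · have hbc : b ≤ c := (pathFromZero.le_of_mem pred hb).trans (pred c).is_le
        rw [← hcomm b c hbc, ← hpred, ih _ (pred c).isLt hb]
      · exact hretr _ _ le_rfl

theorem exists_mem_pathFromZero_eq_apply (hretr : ∀ n k, k ≤ n → φ n (μ k) = μ k)
    (hcomm : ∀ n m, n ≤ m → ∀ y, φ n (φ m y) = φ n y)
    (hpred : ∀ c, μ (pred c) = φ c (μ (c + 1))) (p i : ℕ) :
    ∃ b ∈ pathFromZero pred p, μ b = φ i (μ p) := by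
  induction p using Nat.strong_induction_on with
  | _ p ih =>
    cases p with
    | zero => exact ⟨0, by simp, (hretr i 0 i.zero_le).symm⟩
    | succ c =>
      rcases lt_or_ge c i with hci | hic
      · exact ⟨c + 1, by simp [pathFromZero.succ], (hretr i _ hci).symm⟩
      · obtain ⟨b, hb, hbi⟩ := ih _ (pred c).isLt
        refine ⟨b, by simp [pathFromZero.succ, hb], ?_⟩
        rw [hbi, hpred, hcomm i c hic]

theorem image_pathFromZero (hretr : ∀ n k, k ≤ n → φ n (μ k) = μ k)
    (hcomm : ∀ n m, n ≤ m → ∀ y, φ n (φ m y) = φ n y)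
    (hpred : ∀ c, μ (pred c) = φ c (μ (c + 1))) (p : ℕ) :
    μ '' {b | b ∈ pathFromZero pred p} = Set.range fun i => φ i (μ p) := by
  refine Set.Subset.antisymm ?_ ?_
  · rintro _ ⟨b, hb, rfl⟩
    exact ⟨b, apply_eq_of_mem_pathFromZero hretr hcomm hpred hb⟩
  · rintro _ ⟨i, rfl⟩
    obtain ⟨b, hb, hbi⟩ := exists_mem_pathFromZero_eq_apply hretr hcomm hpred p i
    exact ⟨b, hb, hbi⟩

end Retractions

theorem unique_chain_from_zero_general {M : Type*}
    (μ : ℕ → M) (φ : ℕ → M → M)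
    (hμinj : Function.Injective μ)
    (hrange : ∀ n, Set.range (φ n) = μ '' Set.Iic n)
    (hretr : ∀ n k, k ≤ n → φ n (μ k) = μ k)
    (hcomm : ∀ n m, n ≤ m → ∀ y : M, φ m (φ n y) = φ n y ∧ φ n (φ m y) = φ n y)
    (p : ℕ) (n₀ : ℕ)
    (hn₀ : ∀ i, n₀ ≤ i → φ i (μ p) = μ p) :
    ∃ S : List ℕ,
      (IsChainSeq φ μ S ∧ S.head? = some 0 ∧ S.getLast? = some p) ∧
      (∀ T : List ℕ, IsChainSeq φ μ T → T.head? = some 0 → T.getLast? = some p → T = S) ∧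
      μ '' {j | j ∈ S} = (fun i => φ i (μ p)) '' Set.Iic n₀ := by
  have hpred_exists (c : ℕ) : ∃ j : Fin (c + 1), μ j = φ c (μ (c + 1)) := by
    obtain ⟨j, hj, hμj⟩ := (hrange c).le ⟨μ (c + 1), rfl⟩
    exact ⟨⟨j, Nat.lt_succ_of_le hj⟩, hμj⟩
  choose pred hpred using hpred_exists
  have hcomm' (n m : ℕ) (hnm : n ≤ m) (y : M) : φ n (φ m y) = φ n y := (hcomm n m hnm y).2
  have hR (a c : ℕ) : chainRel φ μ a (c + 1) ↔ a = pred c := chainRel_succ_iff hμinj hpred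
  refine ⟨pathFromZero pred p, ⟨pathFromZero.isChain pred (fun c => (hR _ c).2 rfl) p,
    pathFromZero.head? pred p, pathFromZero.getLast? pred p⟩, ?_, ?_⟩
  · exact fun T hT hhead hlast =>
      pathFromZero.eq_of_isChain pred not_chainRel_zero (fun a c => (hR a c).1) hT hhead hlast
  · rw [image_pathFromZero hretr hcomm' hpred,
      Set.range_eq_image_Iic_of_forall_ge fun i hi => by rw [hn₀ i hi, hn₀ n₀ le_rfl]]

/-- for a commuting, uniformly Lipschitz system of retractions with dense
union of images, every point `μ p` is joined to the base point `μ 0 = 0` by exactly one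
chain; moreover its point set is `T_0^x = {φ i (μ p) : i ≤ n₀}`, where `n₀` is least
with `φ i (μ p) = μ p` for all `i ≥ n₀`. -/
theorem unique_chain_from_zero {M : Type*} [MetricSpace M] (z : M)
    (μ : ℕ → M) (φ : ℕ → M → M)
    (hμ0 : μ 0 = z) (hμinj : Function.Injective μ)
    (hrange : ∀ n, Set.range (φ n) = μ '' Set.Iic n)
    (hretr : ∀ n k, k ≤ n → φ n (μ k) = μ k)
    (hdense : Dense (Set.range μ))
    (K : ℝ≥0) (hlip : ∀ n, LipschitzWith K (φ n))
    (hcomm : ∀ n m, n ≤ m → ∀ y : M, φ m (φ n y) = φ n y ∧ φ n (φ m y) = φ n y)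
    (p : ℕ) (n₀ : ℕ)
    (hn₀ : ∀ i, n₀ ≤ i → φ i (μ p) = μ p)
    (hleast : ∀ m, m < n₀ → ∃ i, m ≤ i ∧ φ i (μ p) ≠ μ p) :
    ∃ S : List ℕ,
      (IsChainSeq φ μ S ∧ S.head? = some 0 ∧ S.getLast? = some p) ∧
      (∀ T : List ℕ, IsChainSeq φ μ T → T.head? = some 0 → T.getLast? = some p → T = S) ∧
      μ '' {j | j ∈ S} = (fun i => φ i (μ p)) '' Set.Iic n₀ :=
  unique_chain_from_zero_general μ φ hμinj hrange hretr hcomm p n₀ hn₀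
end

section
/- Conditionality criterion: Let α, β > 0 and let N be an α-separated metric space with a commuting retraction system {φ_i} (uniformly Lipschitz, nested images {μ_0,...,μ_i}, union dense) inducing Schauder projections P_i on the Lipschitz-free space F(N). Suppose that for every n ≥ n_0 there exist chains S = (μ_0, μ_{k_1}, ..., μ_{k_s}) and T = (μ_0, μ_{l_1}, ..., μ_{l_m}) with d(μ_{k_s}, μ_{l_m}) ≤ β and |S \ T| ≥ n. Then for every n ≥ n_0 there exist a 1-Lipschitz function f vanishing at 0 and signs ε_0, ..., ε_{k_s} ∈ {−1, +1} such that the operator P = Σ_{i=0}^{k_s} ε_i (P_{i+1}^* − P_i^*) on Lip_0(N) satisfies ‖P f‖_{Lip} ≥ α(n−1)/β. Consequently the retractional Schauder basis of F(N) is conditional. -/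
/-!
Let `W` be the list of indices of `S` that are not in `T`; it is strictly increasing. The function
`f` equal to `α` at every other point `μ w`, `w ∈ W`, and `0` elsewhere is `1`-Lipschitz by
`α`-separation and vanishes on `μ '' T`, in particular at `μ 0 = z`. For `w ∈ S` the retraction
`φ w` sends the end `μ a` of `S` to `μ w`, so `i ↦ f (φ i (μ a))` jumps by `α` at least `n - 1`
times, and taking for `ε i` the sign of its increments makes `P f (μ a)` its total variation,
at least `α (n - 1)`. Each `φ i (μ b)` lies in `μ '' T`, so `P f (μ b) = 0`, and
`d(μ a, μ b) ≤ β` gives the bound on the Lipschitz constant of `P f`.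
-/

open scoped NNReal

open Finset

theorem List.Nodup.exists_alternating_set {α : Type*} :
    ∀ {W : List α}, W.Nodup →
      ∃ A : Set α, (∀ k ∈ A, k ∈ W) ∧ W.IsChain (fun p q => p ∈ A ↔ q ∉ A)
  | [], _ => ⟨∅, by simp, .nil⟩
  | [x], _ => ⟨{x}, by simp, .singleton x⟩
  | x :: y :: L, hW => by
    obtain ⟨hx, hW⟩ := List.nodup_cons.mp hW
    obtain ⟨A, hAW, hA⟩ := hW.exists_alternating_set
    have hxA : x ∉ A := fun h => hx (hAW x h)
    by_cases hy : y ∈ A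
    · exact ⟨A, fun k hk => List.mem_cons_of_mem x (hAW k hk), .cons_cons (by simp [hxA, hy]) hA⟩
    · have hxy : y ≠ x := fun h => hx (h ▸ List.mem_cons_self)
      refine ⟨insert x A, ?_, .cons_cons (by simp [hy, hxy]) (hA.imp_of_mem_imp ?_)⟩
      · rintro k (rfl | hk)
        · exact List.mem_cons_self
        · exact List.mem_cons_of_mem x (hAW k hk)
      · intro p q hp hq hpq
        have hpx : p ≠ x := fun h => hx (h ▸ hp)
        have hqx : q ≠ x := fun h => hx (h ▸ hq)
        simpa [hpx, hqx] using hpq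

theorem lipschitzWith_one_of_dist_le_of_separated {X Y : Type*} [PseudoMetricSpace X]
    [PseudoMetricSpace Y] {δ : ℝ} {f : X → Y} (hsep : ∀ x y : X, x ≠ y → δ ≤ dist x y)
    (hf : ∀ x y, dist (f x) (f y) ≤ δ) : LipschitzWith 1 f := by
  refine LipschitzWith.of_dist_le_mul fun x y => ?_
  rcases eq_or_ne x y with rfl | hxy
  · simp
  · simpa using (hf x y).trans (hsep x y hxy)

theorem mul_length_le_sum_Ico_dist {E : Type*} [PseudoMetricSpace E] (c : ℕ → E) {δ : ℝ} :
    ∀ {W : List ℕ} {x m : ℕ}, (x :: W).IsChain (· ≤ ·) →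
      (x :: W).IsChain (fun p q => δ ≤ dist (c p) (c q)) → (∀ k ∈ x :: W, k ≤ m) →
      δ * W.length ≤ ∑ i ∈ Ico x m, dist (c i) (c (i + 1))
  | [], x, m, _, _, _ => by simpa using sum_nonneg fun i _ => dist_nonneg
  | y :: L, x, m, hle, hδ, hm => by
    rw [List.isChain_cons_cons] at hle hδ
    have hym : y ≤ m := hm y (by simp)
    have ih := mul_length_le_sum_Ico_dist c hle.2 hδ.2 fun k hk =>
      hm k (List.mem_cons_of_mem x hk)
    rw [← sum_Ico_consecutive _ hle.1 hym]
    calc δ * (y :: L).length = δ + δ * L.length := by simp; ring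
      _ ≤ dist (c x) (c y) + ∑ i ∈ Ico y m, dist (c i) (c (i + 1)) := add_le_add hδ.1 ih
      _ ≤ _ := add_le_add_left (dist_le_Ico_sum_dist c hle.1) _

theorem List.Nodup.exists_lipschitzWith_one_alternating {X : Type*} [PseudoMetricSpace X]
    {α : ℝ} (hα : 0 ≤ α) (hsep : ∀ x y : X, x ≠ y → α ≤ dist x y) {W : List X} (hW : W.Nodup) :
    ∃ f : X → ℝ, LipschitzWith 1 f ∧ (∀ x ∉ W, f x = 0) ∧
      W.IsChain (fun x y => dist (f x) (f y) = α) := by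
  obtain ⟨A, hAW, hA⟩ := hW.exists_alternating_set
  set f : X → ℝ := A.indicator fun _ => α
  refine ⟨f, lipschitzWith_one_of_dist_le_of_separated hsep fun x y => ?_,
    fun x hx => Set.indicator_of_notMem (fun h => hx (hAW x h)) _, hA.imp fun x y hxy => ?_⟩
  · by_cases hx : x ∈ A <;> by_cases hy : y ∈ A <;> simp [f, hx, hy, abs_of_nonneg hα, hα]
  · by_cases hx : x ∈ A
    · simp [f, hx, hxy.mp hx, abs_of_nonneg hα]
    · have hy : y ∈ A := by tauto
      simp [f, hx, hy, abs_of_nonneg hα]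

theorem Finset.exists_sign_sum_mul_eq_sum_abs {ι : Type*} (s : Finset ι) (d : ι → ℝ) :
    ∃ ε : ι → ℝ, (∀ i, ε i = 1 ∨ ε i = -1) ∧ ∑ i ∈ s, ε i * d i = ∑ i ∈ s, |d i| := by
  refine ⟨fun i => if 0 ≤ d i then 1 else -1, fun i => by by_cases h : 0 ≤ d i <;> simp [h], ?_⟩
  refine sum_congr rfl fun i _ => ?_
  by_cases h : 0 ≤ d i
  · simp [h, abs_of_nonneg h]
  · simp [h, abs_of_neg (not_le.mp h)]

section RetractionSystem

variable {N : Type*} {μ : ℕ → N} {φ : ℕ → N → N}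

theorem chainRel.retract_eq (hretr : ∀ n k, k ≤ n → φ n (μ k) = μ k)
    (hcomm : ∀ n m, n ≤ m → ∀ y, φ n (φ m y) = φ n y) {p q : ℕ} (h : chainRel φ μ p q) :
    φ p (μ q) = μ p := by
  rw [← hcomm p (q - 1) (by grind [chainRel]), h.2, hretr p p le_rfl]

theorem IsChainSeq.retract_getLast (hretr : ∀ n k, k ≤ n → φ n (μ k) = μ k)
    (hcomm : ∀ n m, n ≤ m → ∀ y, φ n (φ m y) = φ n y) :
    ∀ {S : List ℕ} {b : ℕ}, IsChainSeq φ μ S → S.getLast? = some b →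
      ∀ k ∈ S, φ k (μ b) = μ k ∧ k ≤ b
  | [], _, _, hb => by simp at hb
  | [x], b, _, hb => by
    obtain rfl : x = b := by simpa using hb
    simpa using hretr x x le_rfl
  | x :: y :: L, b, hS, hb => by
    obtain ⟨hxy, hS⟩ := List.isChain_cons_cons.mp hS
    have ih := retract_getLast hretr hcomm hS (by simpa using hb)
    intro k hk
    rcases List.mem_cons.mp hk with rfl | hk
    · obtain ⟨hy, hyb⟩ := ih y List.mem_cons_self
      exact ⟨by rw [← hcomm k y hxy.1.le, hy, hxy.retract_eq hretr hcomm], hxy.1.le.trans hyb⟩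
    · exact ih k hk

theorem IsChainSeq.exists_mem_retract_getLast (hretr : ∀ n k, k ≤ n → φ n (μ k) = μ k)
    (hcomm : ∀ n m, n ≤ m → ∀ y, φ n (φ m y) = φ n y) :
    ∀ {x : ℕ} {L : List ℕ} {b i : ℕ}, IsChainSeq φ μ (x :: L) → (x :: L).getLast? = some b →
      x ≤ i → ∃ l ∈ x :: L, φ i (μ b) = μ l
  | x, [], b, i, _, hb, hxi => by
    obtain rfl : x = b := by simpa using hb
    exact ⟨x, List.mem_cons_self, hretr i x hxi⟩
  | x, y :: L, b, i, hS, hb, hxi => by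
    obtain ⟨hxy, hS'⟩ := List.isChain_cons_cons.mp hS
    by_cases hyi : y ≤ i
    · obtain ⟨l, hl, h⟩ := exists_mem_retract_getLast hretr hcomm hS' (by simpa using hb) hyi
      exact ⟨l, List.mem_cons_of_mem x hl, h⟩
    · refine ⟨x, List.mem_cons_self, ?_⟩
      have hy := (retract_getLast hretr hcomm hS hb y (by simp)).1
      rw [← hcomm i (y - 1) (by omega), ← hcomm (y - 1) y (by omega), hy, hxy.2, hretr i x hxi]

theorem IsChainSeq.exists_lipschitzWith_one_variation_ge [PseudoMetricSpace N] {α : ℝ}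
    (hα : 0 ≤ α) (hsep : ∀ x y : N, x ≠ y → α ≤ dist x y) (hμinj : Function.Injective μ)
    (hretr : ∀ n k, k ≤ n → φ n (μ k) = μ k) (hcomm : ∀ n m, n ≤ m → ∀ y, φ n (φ m y) = φ n y)
    {S T : List ℕ} {a b n : ℕ} (hS : IsChainSeq φ μ S) (hT : IsChainSeq φ μ T)
    (hT0 : T.head? = some 0) (ha : S.getLast? = some a) (hb : T.getLast? = some b)
    (hn : n ≤ (S.filter fun k => decide (k ∉ T)).length) :
    ∃ f : N → ℝ, LipschitzWith 1 f ∧ f (μ 0) = 0 ∧ (∀ i, f (φ i (μ b)) = 0) ∧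
      α * ((n : ℝ) - 1) ≤ ∑ i ∈ range (a + 1), |f (φ (i + 1) (μ a)) - f (φ i (μ a))| := by
  obtain ⟨L, rfl⟩ := List.head?_eq_some_iff.mp hT0
  set W := S.filter fun k => decide (k ∉ 0 :: L)
  have hWS : ∀ k ∈ W, k ∈ S ∧ k ∉ 0 :: L := by simp [W]
  have hW : W.Pairwise (· < ·) :=
    (List.isChain_iff_pairwise.mp (List.IsChain.imp (fun _ _ h => h.1) hS)).sublist
      List.filter_sublist
  obtain ⟨f, hf, hf0, hfW⟩ := (hW.nodup.map hμinj).exists_lipschitzWith_one_alternating hα hsep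
  have hfT : ∀ l ∈ 0 :: L, f (μ l) = 0 := fun l hl => hf0 _ fun h => by
    obtain ⟨k, hk, hkl⟩ := List.mem_map.mp h
    exact (hWS k hk).2 (hμinj hkl ▸ hl)
  refine ⟨f, hf, hfT 0 List.mem_cons_self, fun i => ?_, ?_⟩
  · obtain ⟨l, hl, h⟩ := hT.exists_mem_retract_getLast hretr hcomm hb (Nat.zero_le i)
    rw [h, hfT l hl]
  have hSa := hS.retract_getLast hretr hcomm ha
  set c : ℕ → ℝ := fun i => f (φ i (μ a))
  have hδ : W.IsChain (fun p q => α ≤ dist (c p) (c q)) :=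
    ((List.isChain_map μ).mp hfW).imp_of_mem_imp fun p q hp hq h => by
      simp only [c, (hSa p (hWS p hp).1).1, (hSa q (hWS q hq).1).1, h, le_rfl]
  rcases hWeq : W with _ | ⟨x, W'⟩
  · obtain rfl : n = 0 := by simpa [hWeq] using hn
    simpa using (neg_nonpos.mpr hα).trans (sum_nonneg fun _ _ => abs_nonneg _)
  rw [hWeq] at hW hδ hWS hn
  calc α * ((n : ℝ) - 1) ≤ α * W'.length := by
        have hn' : (n : ℝ) ≤ W'.length + 1 := by exact_mod_cast hn
        gcongr
        linarith
    _ ≤ ∑ i ∈ Ico x a, dist (c i) (c (i + 1)) :=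
        mul_length_le_sum_Ico_dist c (hW.isChain.imp fun _ _ => le_of_lt) hδ
          fun k hk => (hSa k (hWS k hk).1).2
    _ ≤ ∑ i ∈ range (a + 1), dist (c i) (c (i + 1)) :=
        sum_le_sum_of_subset_of_nonneg (fun i hi => by simp only [mem_Ico, mem_range] at hi ⊢; omega)
          fun _ _ _ => dist_nonneg
    _ = _ := sum_congr rfl fun i _ => by rw [dist_comm, Real.dist_eq]

end RetractionSystem

theorem conditionality_criterion_general {N : Type*} [MetricSpace N] (z : N)
    (α β : ℝ) (hα : 0 < α) (hβ : 0 < β)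
    (hsep : ∀ x y : N, x ≠ y → α ≤ dist x y)
    (μ : ℕ → N) (φ : ℕ → N → N)
    (hμ0 : μ 0 = z) (hμinj : Function.Injective μ)
    (hretr : ∀ n k, k ≤ n → φ n (μ k) = μ k)
    (hcomm : ∀ n m, n ≤ m → ∀ y : N, φ m (φ n y) = φ n y ∧ φ n (φ m y) = φ n y)
    (n₀ : ℕ)
    (hchains : ∀ n, n₀ ≤ n → ∃ S T : List ℕ,
      IsChainSeq φ μ S ∧ IsChainSeq φ μ T ∧
      S.head? = some 0 ∧ T.head? = some 0 ∧
      (∃ a b : ℕ, S.getLast? = some a ∧ T.getLast? = some b ∧ dist (μ a) (μ b) ≤ β) ∧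
      n ≤ (S.filter fun a => decide (a ∉ T)).length) :
    ∀ n, n₀ ≤ n → ∃ f : N → ℝ, LipschitzWith 1 f ∧ f z = 0 ∧
      ∃ (m : ℕ) (ε : ℕ → ℝ), (∀ i, ε i = 1 ∨ ε i = -1) ∧
        ∃ u v : N, u ≠ v ∧
          α * ((n : ℝ) - 1) / β * dist u v ≤
            |(∑ i ∈ Finset.range (m + 1), ε i * (f (φ (i + 1) u) - f (φ i u))) -
              (∑ i ∈ Finset.range (m + 1), ε i * (f (φ (i + 1) v) - f (φ i v)))| := by
  have hcomm' : ∀ n m, n ≤ m → ∀ y, φ n (φ m y) = φ n y := fun n m h y => (hcomm n m h y).2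
  intro n hn
  rcases lt_or_ge n 2 with hn2 | hn2
  · refine ⟨fun _ => 0, LipschitzWith.const' 0, rfl, 0, 1, fun _ => Or.inl rfl, μ 0, μ 1,
      hμinj.ne zero_ne_one, ?_⟩
    have hn1 : (n : ℝ) ≤ 1 := by exact_mod_cast Nat.le_of_lt_succ hn2
    have hcoef : α * ((n : ℝ) - 1) / β ≤ 0 :=
      div_nonpos_of_nonpos_of_nonneg (mul_nonpos_of_nonneg_of_nonpos hα.le (by linarith)) hβ.le
    simpa using mul_nonpos_of_nonpos_of_nonneg hcoef dist_nonneg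
  obtain ⟨S, T, hS, hT, -, hT0, ⟨a, b, ha, hb, hab⟩, hlen⟩ := hchains n hn
  obtain ⟨f, hf, hf0, hfb, hfa⟩ := hS.exists_lipschitzWith_one_variation_ge hα.le hsep hμinj
    hretr hcomm' hT hT0 ha hb hlen
  obtain ⟨ε, hε, hεf⟩ := (range (a + 1)).exists_sign_sum_mul_eq_sum_abs
    fun i => f (φ (i + 1) (μ a)) - f (φ i (μ a))
  have hP : α * ((n : ℝ) - 1) ≤
      |(∑ i ∈ range (a + 1), ε i * (f (φ (i + 1) (μ a)) - f (φ i (μ a)))) -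
        (∑ i ∈ range (a + 1), ε i * (f (φ (i + 1) (μ b)) - f (φ i (μ b))))| := by
    simp only [hfb, sub_self, mul_zero, sum_const_zero, sub_zero, hεf]
    rwa [abs_of_nonneg (sum_nonneg fun _ _ => abs_nonneg _)]
  have hpos : 0 < α * ((n : ℝ) - 1) := mul_pos hα (by
    have : (2 : ℝ) ≤ n := by exact_mod_cast hn2
    linarith)
  refine ⟨f, hf, hμ0 ▸ hf0, a, ε, hε, μ a, μ b, fun h => by simp [h] at hP; linarith, ?_⟩
  calc α * ((n : ℝ) - 1) / β * dist (μ a) (μ b) ≤ α * ((n : ℝ) - 1) / β * β := by gcongr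
    _ = α * ((n : ℝ) - 1) := div_mul_cancel₀ _ hβ.ne'
    _ ≤ _ := hP

/-- conditionality criterion: let `N` be `α`-separated with a commuting,
uniformly Lipschitz retraction system `φ i` (images `{μ 0, ..., μ i}`, dense union).
If for every `n ≥ n₀` there are chains `S, T` starting at `μ 0 = 0` whose final points
are `β`-close and with `|S \ T| ≥ n`, then for every `n ≥ n₀` there are a `1`-Lipschitz
function `f` vanishing at `0` and signs `ε 0, ..., ε m ∈ {±1}` such that the operator
`P = Σ_{i ≤ m} ε i (P_{i+1}^* - P_i^*)`, i.e. `P f = Σ ε i (f ∘ φ (i+1) - f ∘ φ i)`,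
has Lipschitz norm at least `α (n-1) / β`. (Hence the retractional basis is
conditional.) -/
theorem conditionality_criterion {N : Type*} [MetricSpace N] (z : N)
    (α β : ℝ) (hα : 0 < α) (hβ : 0 < β)
    (hsep : ∀ x y : N, x ≠ y → α ≤ dist x y)
    (μ : ℕ → N) (φ : ℕ → N → N)
    (hμ0 : μ 0 = z) (hμinj : Function.Injective μ)
    (hrange : ∀ n, Set.range (φ n) = μ '' Set.Iic n)
    (hretr : ∀ n k, k ≤ n → φ n (μ k) = μ k)
    (hdense : Dense (Set.range μ))
    (K : ℝ≥0) (hlip : ∀ i, LipschitzWith K (φ i))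
    (hcomm : ∀ n m, n ≤ m → ∀ y : N, φ m (φ n y) = φ n y ∧ φ n (φ m y) = φ n y)
    (n₀ : ℕ)
    (hchains : ∀ n, n₀ ≤ n → ∃ S T : List ℕ,
      IsChainSeq φ μ S ∧ IsChainSeq φ μ T ∧
      S.head? = some 0 ∧ T.head? = some 0 ∧
      (∃ a b : ℕ, S.getLast? = some a ∧ T.getLast? = some b ∧ dist (μ a) (μ b) ≤ β) ∧
      n ≤ (S.filter fun a => decide (a ∉ T)).length) :
    ∀ n, n₀ ≤ n → ∃ f : N → ℝ, LipschitzWith 1 f ∧ f z = 0 ∧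
      ∃ (m : ℕ) (ε : ℕ → ℝ), (∀ i, ε i = 1 ∨ ε i = -1) ∧
        ∃ u v : N, u ≠ v ∧
          α * ((n : ℝ) - 1) / β * dist u v ≤
            |(∑ i ∈ Finset.range (m + 1), ε i * (f (φ (i + 1) u) - f (φ i u))) -
              (∑ i ∈ Finset.range (m + 1), ε i * (f (φ (i + 1) v) - f (φ i v)))| :=
  conditionality_criterion_general z α β hα hβ hsep μ φ hμ0 hμinj hretr hcomm n₀ hchains
end

section
/- Linear interpolation on a discrete circle is norm-preserving: Let C_m be the graph circle {x_1,...,x_m} (metric d(x_k,x_l) = min{|k−l|, m−|k−l|}), let D ⊆ C_m be nonempty, and for x ∈ C_m let ν^l(x), ν^r(x) ∈ D be the nearest points of D to the left and right of x (with ν^l(x)=ν^r(x)=x if x ∈ D), and let d^l, d^r be the left/right path distances. Define (Pf)(x) = [d^r(x, ν^r(x)) f(ν^l(x)) + d^l(x, ν^l(x)) f(ν^r(x))] / [d^l(x, ν^l(x)) + d^r(x, ν^r(x))] for x ∉ D and (Pf)(x) = f(x) for x ∈ D. Then for every f : D → ℝ that is Lipschitz with constant L (with respect to d restricted to D), the function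 Pf : C_m → ℝ is Lipschitz with the same constant L. -/
/-- Rightward (directed) path distance on the graph circle `ZMod m`. -/
def dR {m : ℕ} [NeZero m] (x y : ZMod m) : ℕ := (y - x).val

/-- Leftward (directed) path distance on the graph circle `ZMod m`. -/
def dL {m : ℕ} [NeZero m] (x y : ZMod m) : ℕ := (x - y).val

/-- The graph-circle metric on `ZMod m`: `d(x,y) = min {d^r(x,y), d^l(x,y)}`. -/
def cdist {m : ℕ} [NeZero m] (x y : ZMod m) : ℝ := (min (dR x y) (dL x y) : ℕ)

/-- The nearest point of `D` to the right of `x` (any minimizer of `d^r(x, ·)` on `D`). -/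
noncomputable def nuR {m : ℕ} [NeZero m] (D : Finset (ZMod m)) (x : ZMod m) : ZMod m :=
  if h : D.Nonempty then (D.exists_min_image (fun a => dR x a) h).choose else x

/-- The nearest point of `D` to the left of `x` (any minimizer of `d^l(x, ·)` on `D`). -/
noncomputable def nuL {m : ℕ} [NeZero m] (D : Finset (ZMod m)) (x : ZMod m) : ZMod m :=
  if h : D.Nonempty then (D.exists_min_image (fun a => dL x a) h).choose else x

/-- Linear interpolation of `f` from `D` to the whole circle:
`(P_D f)(x) = [d^r(x, ν^r x) f(ν^l x) + d^l(x, ν^l x) f(ν^r x)] / [d^l(x, ν^l x) + d^r(x, ν^r x)]`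
for `x ∉ D`, and `(P_D f)(x) = f x` for `x ∈ D`. -/
noncomputable def interp {m : ℕ} [NeZero m] (D : Finset (ZMod m)) (f : ZMod m → ℝ)
    (x : ZMod m) : ℝ :=
  if x ∈ D then f x
  else
    ((dR x (nuR D x) : ℝ) * f (nuL D x) + (dL x (nuL D x) : ℝ) * f (nuR D x)) /
      ((dL x (nuL D x) : ℝ) + (dR x (nuR D x) : ℝ))

open ZMod

/-
On each gap of `D` (an arc between consecutive points `l, r` of `D`), the interpolant is affine
in the position along the arc, with slope `(f r - f l) / n`, where `n` is the length of the arc.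
Since `d(l, r) ≤ n`, every unit step changes the interpolant by at most `L`, and any two points of
the circle are joined by a chain of `d(x, y)` unit steps.
-/

section GraphCircle

variable {m : ℕ} [NeZero m]

lemma val_add_one_of_ne_neg_one {a : ZMod m} (h : a ≠ -1) : (a + 1).val = a.val + 1 := by
  have hlt : a.val + 1 < m := by
    refine lt_of_le_of_ne a.val_lt fun heq => h ?_
    have h0 : a + 1 = 0 := by
      rw [← natCast_zmod_val a, ← Nat.cast_succ, Nat.succ_eq_add_one, heq, natCast_self]
    exact eq_neg_of_add_eq_zero_left h0
  rw [← val_cast_of_lt hlt, Nat.cast_succ, natCast_zmod_val]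

lemma dR_eq_zero_iff {x y : ZMod m} : dR x y = 0 ↔ x = y := by
  rw [dR, val_eq_zero, sub_eq_zero, eq_comm]

lemma dL_eq_zero_iff {x y : ZMod m} : dL x y = 0 ↔ x = y := by
  rw [dL, val_eq_zero, sub_eq_zero]

lemma dL_self (x : ZMod m) : dL x x = 0 := dL_eq_zero_iff.2 rfl

lemma dR_self (x : ZMod m) : dR x x = 0 := dR_eq_zero_iff.2 rfl

lemma dR_left_injective (x : ZMod m) : Function.Injective (dR x) :=
  fun _ _ h => sub_left_injective (val_injective m h)

lemma dL_left_injective (x : ZMod m) : Function.Injective (dL x) :=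
  fun _ _ h => sub_right_injective (val_injective m h)

lemma dR_triangle (x y z : ZMod m) : dR x z ≤ dR x y + dR y z := by
  rw [dR, dR, dR, show z - x = (y - x) + (z - y) by ring]
  exact val_add_le _ _

lemma dR_self_add_one_le (x : ZMod m) : dR x (x + 1) ≤ 1 := by
  rw [dR, add_sub_cancel_left, val_one_eq_one_mod]
  exact Nat.mod_le 1 m

lemma dR_add_one_left_add_one {x y : ZMod m} (h : y ≠ x) : dR (x + 1) y + 1 = dR x y := by
  have hne : y - (x + 1) ≠ -1 := fun e => h (by linear_combination e)
  rw [dR, dR, ← val_add_one_of_ne_neg_one hne]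
  ring_nf

lemma dL_add_one_left {x y : ZMod m} (h : y ≠ x + 1) : dL (x + 1) y = dL x y + 1 := by
  have hne : x - y ≠ -1 := fun e => h (by linear_combination -e)
  rw [dL, dL, ← val_add_one_of_ne_neg_one hne]
  ring_nf

lemma dR_le_dL_add_dR_add_one (x l r : ZMod m) : dR l r ≤ dL x l + dR (x + 1) r + 1 := by
  have h₁ := dR_triangle l x r
  have h₂ := dR_triangle x (x + 1) r
  have h₃ := dR_self_add_one_le x
  have h₄ : dR l x = dL x l := rfl
  omega

lemma cdist_le_dR (x y : ZMod m) : cdist x y ≤ dR x y := by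
  rw [cdist]
  exact_mod_cast min_le_left _ _

theorem dist_le_mul_cdist_of_dist_add_one_le {α : Type*} [PseudoMetricSpace α]
    {g : ZMod m → α} {L : ℝ} (h : ∀ x, dist (g x) (g (x + 1)) ≤ L) (x y : ZMod m) :
    dist (g x) (g y) ≤ L * cdist x y := by
  have hsteps : ∀ (k : ℕ) x, dist (g x) (g (x + k)) ≤ k * L := by
    intro k
    induction k with
    | zero => simp
    | succ k ih =>
      intro x
      calc dist (g x) (g (x + (k + 1 : ℕ)))
          ≤ dist (g x) (g (x + k)) + dist (g (x + k)) (g (x + k + 1)) := by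
            rw [Nat.cast_succ, ← add_assoc]
            exact dist_triangle _ _ _
        _ ≤ k * L + L := add_le_add (ih x) (h _)
        _ = (k + 1 : ℕ) * L := by push_cast; ring
  have hL : 0 ≤ L := dist_nonneg.trans (h x)
  rw [cdist, Nat.cast_min, mul_min_of_nonneg _ _ hL]
  refine le_min ?_ ?_
  · simpa [dR, mul_comm] using hsteps (dR x y) x
  · rw [dist_comm]
    simpa [dL, mul_comm] using hsteps (dL x y) y

end GraphCircle

section Nearest

variable {m : ℕ} [NeZero m] {D : Finset (ZMod m)}

lemma nuR_mem (hD : D.Nonempty) (x : ZMod m) : nuR D x ∈ D := by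
  rw [nuR, dif_pos hD]
  exact (D.exists_min_image (dR x) hD).choose_spec.1

lemma dR_nuR_le (x : ZMod m) {a : ZMod m} (ha : a ∈ D) : dR x (nuR D x) ≤ dR x a := by
  rw [nuR, dif_pos ⟨a, ha⟩]
  exact (D.exists_min_image (dR x) ⟨a, ha⟩).choose_spec.2 a ha

lemma nuL_mem (hD : D.Nonempty) (x : ZMod m) : nuL D x ∈ D := by
  rw [nuL, dif_pos hD]
  exact (D.exists_min_image (dL x) hD).choose_spec.1

lemma dL_nuL_le (x : ZMod m) {a : ZMod m} (ha : a ∈ D) : dL x (nuL D x) ≤ dL x a := by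
  rw [nuL, dif_pos ⟨a, ha⟩]
  exact (D.exists_min_image (dL x) ⟨a, ha⟩).choose_spec.2 a ha

lemma nuL_eq_self {x : ZMod m} (hx : x ∈ D) : nuL D x = x := by
  have h := dL_nuL_le x hx
  rw [dL_self, Nat.le_zero, dL_eq_zero_iff] at h
  exact h.symm

lemma nuR_eq_self {x : ZMod m} (hx : x ∈ D) : nuR D x = x := by
  have h := dR_nuR_le x hx
  rw [dR_self, Nat.le_zero, dR_eq_zero_iff] at h
  exact h.symm

lemma nuR_add_one (hD : D.Nonempty) {x : ZMod m} (hx : x ∉ D) : nuR D (x + 1) = nuR D x := by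
  have hr := nuR_mem hD x
  have hr' := nuR_mem hD (x + 1)
  have h₁ := dR_nuR_le x hr'
  have h₂ := dR_nuR_le (x + 1) hr
  refine dR_left_injective (x + 1) ?_
  rw [← dR_add_one_left_add_one (ne_of_mem_of_not_mem hr' hx),
    ← dR_add_one_left_add_one (ne_of_mem_of_not_mem hr hx)] at h₁
  omega

lemma nuL_add_one (hD : D.Nonempty) {x : ZMod m} (hx : x + 1 ∉ D) :
    nuL D (x + 1) = nuL D x := by
  have hl := nuL_mem hD x
  have hl' := nuL_mem hD (x + 1)
  have h₁ := dL_nuL_le x hl'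
  have h₂ := dL_nuL_le (x + 1) hl
  refine dL_left_injective (x + 1) ?_
  rw [dL_add_one_left (ne_of_mem_of_not_mem hl hx),
    dL_add_one_left (ne_of_mem_of_not_mem hl' hx)] at h₂ ⊢
  omega

end Nearest

lemma abs_sub_affine_step_le {a b t s L : ℝ} (ht : 0 ≤ t) (hs : 0 ≤ s)
    (h : |b - a| ≤ L * (t + s + 1)) :
    |a + t / (t + s + 1) * (b - a) - (a + (t + 1) / (t + s + 1) * (b - a))| ≤ L := by
  have hn : 0 < t + s + 1 := by positivity
  rw [show a + t / (t + s + 1) * (b - a) - (a + (t + 1) / (t + s + 1) * (b - a))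
      = -(b - a) / (t + s + 1) by field_simp; ring,
    abs_div, abs_neg, abs_of_pos hn, div_le_iff₀ hn]
  exact h

section Interpolation

variable {m : ℕ} [NeZero m] {D : Finset (ZMod m)} {f : ZMod m → ℝ}

/- This holds also for `y ∈ D`: there `dL y (nuL D y) = 0`, and the quotient is `0 / 0 = 0`. -/
lemma interp_eq_add_mul (hD : D.Nonempty) (y : ZMod m) :
    interp D f y = f (nuL D y) + (dL y (nuL D y) : ℝ) /
      (dL y (nuL D y) + dR y (nuR D y)) * (f (nuR D y) - f (nuL D y)) := by
  by_cases hy : y ∈ D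
  · simp [interp, hy, nuL_eq_self hy, dL_self]
  · have hl : nuL D y ≠ y := ne_of_mem_of_not_mem (nuL_mem hD y) hy
    have ht : (0 : ℝ) < dL y (nuL D y) := by
      exact_mod_cast Nat.pos_of_ne_zero fun h => hl (dL_eq_zero_iff.1 h).symm
    rw [interp, if_neg hy]
    field_simp
    ring

lemma interp_eq_gap (hD : D.Nonempty) (x : ZMod m) :
    interp D f x = f (nuL D x) + (dL x (nuL D x) : ℝ) /
      (dL x (nuL D x) + dR (x + 1) (nuR D (x + 1)) + 1) * (f (nuR D (x + 1)) - f (nuL D x)) := by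
  by_cases hx : x ∈ D
  · simp [interp, hx, nuL_eq_self hx, dL_self]
  · rw [interp_eq_add_mul hD, nuR_add_one hD hx,
      ← dR_add_one_left_add_one (ne_of_mem_of_not_mem (nuR_mem hD x) hx)]
    push_cast
    ring

lemma interp_add_one_eq_gap (hD : D.Nonempty) (x : ZMod m) :
    interp D f (x + 1) = f (nuL D x) + ((dL x (nuL D x) : ℝ) + 1) /
      (dL x (nuL D x) + dR (x + 1) (nuR D (x + 1)) + 1) * (f (nuR D (x + 1)) - f (nuL D x)) := by
  by_cases hx : x + 1 ∈ D
  · have hpos : (0 : ℝ) < dL x (nuL D x) + 1 := by positivity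
    simp only [interp, if_pos hx, nuR_eq_self hx, dR_self, CharP.cast_eq_zero, add_zero,
      div_self hpos.ne', one_mul, add_sub_cancel]
  · rw [interp_eq_add_mul hD, nuL_add_one hD hx,
      dL_add_one_left (ne_of_mem_of_not_mem (nuL_mem hD x) hx)]
    push_cast
    ring

lemma abs_interp_sub_interp_add_one_le (hD : D.Nonempty) {L : ℝ} (hL : 0 ≤ L)
    (hf : ∀ a ∈ D, ∀ b ∈ D, |f a - f b| ≤ L * cdist a b) (x : ZMod m) :
    |interp D f x - interp D f (x + 1)| ≤ L := by
  rw [interp_eq_gap hD, interp_add_one_eq_gap hD]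
  refine abs_sub_affine_step_le (by positivity) (by positivity) ?_
  have hgap : cdist (nuL D x) (nuR D (x + 1)) ≤
      (dL x (nuL D x) + dR (x + 1) (nuR D (x + 1)) + 1 : ℕ) :=
    (cdist_le_dR _ _).trans (mod_cast dR_le_dL_add_dR_add_one x _ _)
  calc |f (nuR D (x + 1)) - f (nuL D x)|
      ≤ L * cdist (nuL D x) (nuR D (x + 1)) := by
        rw [abs_sub_comm]
        exact hf _ (nuL_mem hD x) _ (nuR_mem hD (x + 1))
    _ ≤ L * (dL x (nuL D x) + dR (x + 1) (nuR D (x + 1)) + 1) := by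
        push_cast at hgap
        gcongr

end Interpolation

/-- linear interpolation on a discrete circle preserves the Lipschitz
constant: if `f` is `L`-Lipschitz on `D ⊆ C_m`, then `interp D f` is `L`-Lipschitz
on all of `C_m`. -/
theorem interp_lipschitz {m : ℕ} [NeZero m] (D : Finset (ZMod m)) (hD : D.Nonempty)
    (L : ℝ) (hL : 0 ≤ L) (f : ZMod m → ℝ)
    (hf : ∀ a ∈ D, ∀ b ∈ D, |f a - f b| ≤ L * cdist a b) :
    ∀ x y : ZMod m, |interp D f x - interp D f y| ≤ L * cdist x y := by
  intro x y
  rw [← Real.dist_eq]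
  refine dist_le_mul_cdist_of_dist_add_one_le (fun z => ?_) x y
  rw [Real.dist_eq]
  exact abs_interp_sub_interp_add_one_le hD hL hf z
end
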